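/- arXiv:2201.02090 — 8 statements merged into one kernel-verified Lean document; each statement's English description precedes it below -/
import Mathlib

section
/- Let τ₁ > 0. Then τ_s(θ) = τ₁ for all θ ∈ [0, π) if and only if the following three conditions hold: det(M(τ)) > 0 for all τ ∈ (0, τ₁); the set {τ > 0 : det(M(τ)) = 0} has a minimum and this minimum equals τ₁; and M(τ₁) is the zero matrix. -/
/-!
A symmetric `2 × 2` matrix `A` with `det A > 0` is definite, so its quadratic form has no zero on
the unit circle, while for `det A ≤ 0` it has an isotropic line. Since every line through the
origin is spanned by some `x_θ` with `θ ∈ [0, π)`, `τ_s ≡ τ₁` forces every `x_θ` to be isotropic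
for `M τ₁` (hence `M τ₁ = 0` by polarization) and no `x_θ` to be isotropic for `M τ`, `τ < τ₁`
(hence `det (M τ) > 0` there); conversely these conditions make `τ₁` the first zero of every
`τ ↦ f_s(θ, τ)`.
-/

open Matrix Real

lemma exists_mem_Ico_pi_eq_smul_cos_sin (v : Fin 2 → ℝ) :
    ∃ θ ∈ Set.Ico 0 π, ∃ r : ℝ, v = r • ![cos θ, sin θ] := by
  by_cases hv₀ : v 0 = 0
  · refine ⟨π / 2, ⟨by positivity, by linarith [pi_pos]⟩, v 1, ?_⟩
    ext i; fin_cases i <;> simp [hv₀]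
  set θ₀ := arctan (v 1 / v 0)
  have hcos : 0 < cos θ₀ := cos_arctan_pos _
  have htan : sin θ₀ / cos θ₀ = v 1 / v 0 := by rw [← tan_eq_sin_div_cos, tan_arctan]
  obtain ⟨r, hr⟩ : ∃ r : ℝ, v = r • ![cos θ₀, sin θ₀] := by
    refine ⟨v 0 / cos θ₀, funext fun i => ?_⟩
    fin_cases i
    · simp [hcos.ne']
    · simp only [Fin.mk_one, Pi.smul_apply, cons_val_one, cons_val_zero, smul_eq_mul]
      field_simp at htan ⊢
      linarith
  obtain ⟨hlo, hhi⟩ := arctan_mem_Ioo (v 1 / v 0)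
  rcases le_or_gt 0 θ₀ with hθ₀ | hθ₀
  · exact ⟨θ₀, ⟨hθ₀, by linarith⟩, r, hr⟩
  · refine ⟨θ₀ + π, ⟨by linarith, by linarith⟩, -r, ?_⟩
    rw [hr, cos_add_pi, sin_add_pi]
    ext i; fin_cases i <;> simp

lemma cos_sin_ne_zero (θ : ℝ) : ![cos θ, sin θ] ≠ 0 := by
  intro h
  have h₀ : cos θ = 0 := by simpa using congrFun h 0
  have h₁ : sin θ = 0 := by simpa using congrFun h 1
  simpa [h₀, h₁] using sin_sq_add_cos_sq θ

namespace Matrix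

lemma smul_dotProduct_mulVec_smul {n R : Type*} [Fintype n] [CommRing R]
    (A : Matrix n n R) (r : R) (v : n → R) :
    (r • v) ⬝ᵥ A *ᵥ (r • v) = r ^ 2 * (v ⬝ᵥ A *ᵥ v) := by
  simp only [mulVec_smul, smul_dotProduct, dotProduct_smul, smul_eq_mul]
  ring

namespace IsSymm

variable {A : Matrix (Fin 2) (Fin 2) ℝ}

lemma dotProduct_mulVec_fin_two (hA : A.IsSymm) (v : Fin 2 → ℝ) :
    v ⬝ᵥ A *ᵥ v = A 0 0 * v 0 ^ 2 + 2 * A 0 1 * v 0 * v 1 + A 1 1 * v 1 ^ 2 := by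
  simp only [dotProduct, mulVec, Fin.sum_univ_two, hA.apply 0 1]
  ring

lemma det_fin_two (hA : A.IsSymm) : A.det = A 0 0 * A 1 1 - A 0 1 ^ 2 := by
  rw [Matrix.det_fin_two, hA.apply 0 1]
  ring

lemma dotProduct_mulVec_self_ne_zero (hA : A.IsSymm) (hdet : 0 < A.det) {v : Fin 2 → ℝ}
    (hv : v ≠ 0) : v ⬝ᵥ A *ᵥ v ≠ 0 := by
  rw [hA.det_fin_two] at hdet
  rw [hA.dotProduct_mulVec_fin_two]
  intro hq
  have hsos : (A 0 0 * v 0 + A 0 1 * v 1) ^ 2 + (A 0 1 * v 0 + A 1 1 * v 1) ^ 2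
      + (A 0 0 * A 1 1 - A 0 1 ^ 2) * (v 0 ^ 2 + v 1 ^ 2) = 0 := by
    linear_combination (A 0 0 + A 1 1) * hq
  have hsum : v 0 ^ 2 + v 1 ^ 2 ≤ 0 := by
    by_contra! hpos
    nlinarith [mul_pos hdet hpos, sq_nonneg (A 0 0 * v 0 + A 0 1 * v 1),
      sq_nonneg (A 0 1 * v 0 + A 1 1 * v 1)]
  refine hv (funext fun i => ?_)
  fin_cases i <;> simp <;> nlinarith [sq_nonneg (v 0), sq_nonneg (v 1)]

lemma exists_dotProduct_mulVec_self_eq_zero (hA : A.IsSymm) (hdet : A.det ≤ 0) :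
    ∃ v ≠ 0, v ⬝ᵥ A *ᵥ v = 0 := by
  rw [hA.det_fin_two] at hdet
  by_cases hc : A 1 1 = 0
  · refine ⟨![0, 1], by simp, ?_⟩
    rw [hA.dotProduct_mulVec_fin_two]
    simp [hc]
  -- `(c, -b + √(b² - a c))` is isotropic for `a x² + 2 b x y + c y²`.
  set s := √(A 0 1 ^ 2 - A 0 0 * A 1 1)
  have hs : s ^ 2 = A 0 1 ^ 2 - A 0 0 * A 1 1 := sq_sqrt (by linarith)
  refine ⟨![A 1 1, -A 0 1 + s], fun h => hc (by simpa using congrFun h 0), ?_⟩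
  rw [hA.dotProduct_mulVec_fin_two]
  simp only [cons_val_zero, cons_val_one]
  linear_combination A 1 1 * hs

lemma det_pos_iff (hA : A.IsSymm) :
    0 < A.det ↔ ∀ θ ∈ Set.Ico 0 π, ![cos θ, sin θ] ⬝ᵥ A *ᵥ ![cos θ, sin θ] ≠ 0 := by
  refine ⟨fun hdet θ _ => hA.dotProduct_mulVec_self_ne_zero hdet (cos_sin_ne_zero θ), ?_⟩
  contrapose!
  intro hdet
  obtain ⟨v, hv, hq⟩ := hA.exists_dotProduct_mulVec_self_eq_zero hdet
  obtain ⟨θ, hθ, r, rfl⟩ := exists_mem_Ico_pi_eq_smul_cos_sin v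
  have hr : r ≠ 0 := by rintro rfl; simp at hv
  rw [smul_dotProduct_mulVec_smul] at hq
  exact ⟨θ, hθ, (mul_eq_zero.mp hq).resolve_left (pow_ne_zero 2 hr)⟩

lemma eq_zero_iff (hA : A.IsSymm) :
    A = 0 ↔ ∀ θ ∈ Set.Ico 0 π, ![cos θ, sin θ] ⬝ᵥ A *ᵥ ![cos θ, sin θ] = 0 := by
  refine ⟨fun h θ _ => by simp [h], fun h => ?_⟩
  have hq (v : Fin 2 → ℝ) : v ⬝ᵥ A *ᵥ v = 0 := by
    obtain ⟨θ, hθ, r, rfl⟩ := exists_mem_Ico_pi_eq_smul_cos_sin v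
    rw [smul_dotProduct_mulVec_smul, h θ hθ, mul_zero]
  have h₀ := hq ![1, 0]
  have h₁ := hq ![0, 1]
  have h₀₁ := hq ![1, 1]
  simp only [hA.dotProduct_mulVec_fin_two, cons_val_zero, cons_val_one] at h₀ h₁ h₀₁
  norm_num at h₀ h₁ h₀₁
  have hb : A 0 1 = 0 := by linarith
  ext i j
  fin_cases i <;> fin_cases j
  all_goals simp [h₀, h₁, hb, hA.apply 0 1]

end IsSymm

end Matrix

theorem periodic_triggering_iff_general (M : ℝ → Matrix (Fin 2) (Fin 2) ℝ)
    (hsymm : ∀ τ, (M τ).IsSymm)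
    (τs : ℝ → ℝ)
    (hτs : ∀ θ : ℝ, IsLeast
      {τ : ℝ | 0 < τ ∧
        ![Real.cos θ, Real.sin θ] ⬝ᵥ (M τ).mulVec ![Real.cos θ, Real.sin θ] = 0} (τs θ))
    (τ₁ : ℝ) :
    (∀ θ ∈ Set.Ico 0 π, τs θ = τ₁) ↔
      ((∀ τ ∈ Set.Ioo 0 τ₁, 0 < (M τ).det) ∧
       IsLeast {τ : ℝ | 0 < τ ∧ (M τ).det = 0} τ₁ ∧
       M τ₁ = 0) := by
  constructor
  · intro h
    have hpos : 0 < τ₁ := h 0 ⟨le_rfl, pi_pos⟩ ▸ (hτs 0).1.1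
    have hdet : ∀ τ ∈ Set.Ioo 0 τ₁, 0 < (M τ).det := fun τ hτ =>
      (hsymm τ).det_pos_iff.mpr fun θ hθ hq =>
        (hτs θ).2 ⟨hτ.1, hq⟩ |>.not_gt (h θ hθ ▸ hτ.2)
    have hzero : M τ₁ = 0 := (hsymm τ₁).eq_zero_iff.mpr fun θ hθ =>
      (h θ hθ ▸ (hτs θ).1).2
    refine ⟨hdet, ⟨⟨hpos, by simp [hzero]⟩, fun τ hτ => ?_⟩, hzero⟩
    exact not_lt.mp fun hlt => (hdet τ ⟨hτ.1, hlt⟩).ne' hτ.2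
  · rintro ⟨hdet, ⟨⟨hpos, -⟩, -⟩, hzero⟩ θ hθ
    refine (hτs θ).unique ⟨⟨hpos, by simp [hzero]⟩, fun τ hτ => not_lt.mp fun hlt => ?_⟩
    exact (hsymm τ).det_pos_iff.mp (hdet τ ⟨hτ.1, hlt⟩) θ hθ hτ.2

/-- The inter-event time function `τ_s` is identically `τ₁` on `[0, π)`
iff `det (M τ) > 0` on `(0, τ₁)`, `τ₁` is the minimum of `{τ > 0 : det (M τ) = 0}`, and
`M τ₁` is the zero matrix. Here `τ_s θ` is the minimum of
`{τ > 0 : x_θᵀ M(τ) x_θ = 0}`, assumed to exist for every `θ`. -/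
theorem periodic_triggering_iff (M : ℝ → Matrix (Fin 2) (Fin 2) ℝ)
    (hsymm : ∀ τ, (M τ).IsSymm)
    (τs : ℝ → ℝ)
    (hτs : ∀ θ : ℝ, IsLeast
      {τ : ℝ | 0 < τ ∧
        ![Real.cos θ, Real.sin θ] ⬝ᵥ (M τ).mulVec ![Real.cos θ, Real.sin θ] = 0} (τs θ))
    (τ₁ : ℝ) (hτ₁ : 0 < τ₁) :
    (∀ θ ∈ Set.Ico 0 π, τs θ = τ₁) ↔
      ((∀ τ ∈ Set.Ioo 0 τ₁, 0 < (M τ).det) ∧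
       IsLeast {τ : ℝ | 0 < τ ∧ (M τ).det = 0} τ₁ ∧
       M τ₁ = 0) :=
  periodic_triggering_iff_general M hsymm τs hτs τ₁
end

section
/- Suppose Assumption (A1) holds and τ_max := sup_{θ ∈ ℝ} τ_s(θ) < ∞. If ∂f_s/∂τ(θ̄, τ̄) = x_{θ̄}ᵀ M′(τ̄) x_{θ̄} ≠ 0 for every pair (θ̄, τ̄) ∈ ℝ × (0, ∞) with f_s(θ̄, τ̄) = 0, then the inter-event time function τ_s : ℝ → (0, ∞) is continuously differentiable on ℝ. -/
/-!
Fix `θ₀` and let `τ₀ = τ_s(θ₀)`. Since `∂f_s/∂τ (θ₀, τ₀) ≠ 0`, the implicit function theorem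
gives a `C¹` function `ψ` with `ψ(θ₀) = τ₀` whose graph is, near `(θ₀, τ₀)`, the whole zero set
of `f_s`. Because `f_s < 0` for `0 < τ < τ_m`, zeros of `f_s` cannot escape to `τ = 0`, and a
compactness argument on `[τ_m, t]` shows that `τ_s` is lower semicontinuous; as `ψ(θ)` is itself
a positive zero, `τ_s ≤ ψ` near `θ₀`. Hence `τ_s` is continuous at `θ₀`, so `(θ, τ_s(θ))` stays
in the neighbourhood where zeros lie on the graph of `ψ`, i.e. `τ_s = ψ` near `θ₀`.
-/

open Matrix Real Filter Set Topology

theorem ContinuousLinearMap.isInvertible_of_apply_one_ne_zero {𝕜 : Type*}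
    [NontriviallyNormedField 𝕜] {L : 𝕜 →L[𝕜] 𝕜} (h : L 1 ≠ 0) : L.IsInvertible := by
  refine .of_inverse (g := (L 1)⁻¹ • .id 𝕜 𝕜) ?_ ?_ <;>
  · ext
    simp [h]

theorem DifferentiableAt.isInvertible_fderiv_comp_inr {𝕜 E : Type*}
    [NontriviallyNormedField 𝕜] [NormedAddCommGroup E] [NormedSpace 𝕜 E] {F : E × 𝕜 → 𝕜} {u : E × 𝕜}
    (hF : DifferentiableAt 𝕜 F u) (h : deriv (fun y => F (u.1, y)) u.2 ≠ 0) :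
    (fderiv 𝕜 F u ∘L .inr 𝕜 E 𝕜).IsInvertible := by
  have hcurve : HasDerivAt (fun y : 𝕜 => ((u.1, y) : E × 𝕜)) (0, 1) u.2 :=
    (hasDerivAt_const _ _).prodMk (hasDerivAt_id _)
  refine ContinuousLinearMap.isInvertible_of_apply_one_ne_zero ?_
  convert h using 1
  exact (hF.hasFDerivAt.comp_hasDerivAt u.2 hcurve).deriv.symm

theorem continuousAt_of_lowerSemicontinuousAt_of_eventually_le {X : Type*}
    [TopologicalSpace X] {f g : X → ℝ} {x : X} (hf : LowerSemicontinuousAt f x)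
    (hg : ContinuousAt g x) (hfg : ∀ᶠ y in 𝓝 x, f y ≤ g y) (hx : f x = g x) : ContinuousAt f x := by
  refine tendsto_order.2 ⟨hf, fun b hb => ?_⟩
  filter_upwards [hfg, hg.eventually (eventually_lt_nhds (hx ▸ hb))] with y h₁ h₂
  exact h₁.trans_lt h₂

section FirstPositiveZero

variable {X : Type*} {F : X × ℝ → ℝ} {τs : X → ℝ} {a : ℝ}

theorem le_of_isLeast_pos_zero (hFa : ∀ x, ∀ τ ∈ Ioo 0 a, F (x, τ) ≠ 0)
    (hτs : ∀ x, IsLeast {τ | 0 < τ ∧ F (x, τ) = 0} (τs x)) (x : X) : a ≤ τs x := by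
  by_contra! h
  exact hFa x (τs x) ⟨(hτs x).1.1, h⟩ (hτs x).1.2

theorem lowerSemicontinuous_of_isLeast_pos_zero [TopologicalSpace X] (ha : 0 < a)
    (hF : ∀ p : X × ℝ, 0 < p.2 → ContinuousAt F p)
    (hFa : ∀ x, ∀ τ ∈ Ioo 0 a, F (x, τ) ≠ 0)
    (hτs : ∀ x, IsLeast {τ | 0 < τ ∧ F (x, τ) = 0} (τs x)) :
    LowerSemicontinuous τs := by
  intro x₀ t ht
  have hK : ∀ᶠ x in 𝓝 x₀, ∀ s ∈ Icc a t, F (x, s) ≠ 0 := by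
    refine isCompact_Icc.eventually_forall_of_forall_eventually fun s hs => ?_
    have hs₀ : 0 < s := ha.trans_le hs.1
    have hne : F (x₀, s) ≠ 0 := fun h => (hs.2.trans_lt ht).not_ge ((hτs x₀).2 ⟨hs₀, h⟩)
    exact (hF (x₀, s) hs₀).eventually_ne hne
  filter_upwards [hK] with x hx
  by_contra! h
  exact hx (τs x) ⟨le_of_isLeast_pos_zero hFa hτs x, h⟩ (hτs x).1.2

theorem contDiffAt_of_isLeast_pos_zero
    [NormedAddCommGroup X] [NormedSpace ℝ X] [CompleteSpace X] {n : WithTop ℕ∞}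
    (hn : n ≠ 0) (ha : 0 < a)
    (hF : ∀ p : X × ℝ, 0 < p.2 → ContDiffAt ℝ n F p)
    (hFa : ∀ x, ∀ τ ∈ Ioo 0 a, F (x, τ) ≠ 0)
    (hτs : ∀ x, IsLeast {τ | 0 < τ ∧ F (x, τ) = 0} (τs x)) (x₀ : X)
    (hderiv : deriv (fun τ => F (x₀, τ)) (τs x₀) ≠ 0) :
    ContDiffAt ℝ n τs x₀ := by
  obtain ⟨⟨hpos, hzero⟩, -⟩ := hτs x₀
  have hFu := hF (x₀, τs x₀) hpos
  have hinv := (hFu.differentiableAt hn).isInvertible_fderiv_comp_inr hderiv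
  set ψ := hFu.implicitFunction hn hinv
  have hψ : ContDiffAt ℝ n ψ x₀ := hFu.contDiffAt_implicitFunction hn hinv
  have hψ_self : ψ x₀ = τs x₀ := hFu.implicitFunction_apply_self hn hinv
  have hle : ∀ᶠ x in 𝓝 x₀, τs x ≤ ψ x := by
    filter_upwards [hFu.eventually_apply_implicitFunction hn hinv,
      hψ.continuousAt.eventually (eventually_gt_nhds (hψ_self ▸ hpos))] with x hx hx_pos
    exact (hτs x).2 ⟨hx_pos, hx.trans hzero⟩
  have hcont : ContinuousAt τs x₀ :=
    continuousAt_of_lowerSemicontinuousAt_of_eventually_le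
      (lowerSemicontinuous_of_isLeast_pos_zero ha (fun p hp => (hF p hp).continuousAt) hFa hτs
        x₀)
      hψ.continuousAt hle hψ_self.symm
  have hgraph : Tendsto (fun x => (x, τs x)) (𝓝 x₀) (𝓝 (x₀, τs x₀)) :=
    tendsto_id.prodMk_nhds hcont
  refine hψ.congr_of_eventuallyEq ?_
  filter_upwards [hgraph.eventually (hFu.eventually_apply_eq_iff_implicitFunction hn hinv)]
    with x hx
  exact (hx.1 ((hτs x).1.2.trans hzero.symm)).symm

end FirstPositiveZero

noncomputable def circleQuadForm (M : ℝ → Matrix (Fin 2) (Fin 2) ℝ) (p : ℝ × ℝ) : ℝ :=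
  ![cos p.1, sin p.1] ⬝ᵥ M p.2 *ᵥ ![cos p.1, sin p.1]

variable {M : ℝ → Matrix (Fin 2) (Fin 2) ℝ}

theorem contDiffAt_circleQuadForm {n : WithTop ℕ∞} {p : ℝ × ℝ}
    (hM : ∀ i j, ContDiffAt ℝ n (fun τ => M τ i j) p.2) :
    ContDiffAt ℝ n (circleQuadForm M) p := by
  have hM' : ∀ i j, ContDiffAt ℝ n (fun q : ℝ × ℝ => M q.2 i j) p :=
    fun i j => (hM i j).comp p contDiffAt_snd
  change ContDiffAt ℝ n
    (fun q : ℝ × ℝ => ![cos q.1, sin q.1] ⬝ᵥ M q.2 *ᵥ ![cos q.1, sin q.1]) p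
  simp only [dotProduct, mulVec, Fin.sum_univ_two, cons_val_zero, cons_val_one]
  fun_prop

theorem circleQuadForm_neg {τ : ℝ} (h : (-(M τ)).PosDef) (θ : ℝ) :
    circleQuadForm M (θ, τ) < 0 := by
  have hx : ![cos θ, sin θ] ≠ 0 := fun h0 => by
    simp only [cons_eq_zero_iff, zero_empty, and_true] at h0
    simpa [h0] using sin_sq_add_cos_sq θ
  have hpos := h.dotProduct_mulVec_pos hx
  simp only [star_trivial, neg_mulVec, dotProduct_neg, Left.neg_pos_iff] at hpos
  exact hpos

theorem ts_contDiff_of_deriv_ne_zero_general (M : ℝ → Matrix (Fin 2) (Fin 2) ℝ)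
    (hanal : ∀ i j, AnalyticOnNhd ℝ (fun τ => M τ i j) (Set.Ici 0))
    (τm : ℝ) (hτm : IsLeast {τ : ℝ | 0 < τ ∧ (M τ).det = 0} τm)
    (hnegdef : ∀ τ ∈ Set.Ioo 0 τm, (-(M τ)).PosDef)
    (τs : ℝ → ℝ)
    (hτs : ∀ θ : ℝ, IsLeast
      {τ : ℝ | 0 < τ ∧
        ![Real.cos θ, Real.sin θ] ⬝ᵥ (M τ).mulVec ![Real.cos θ, Real.sin θ] = 0} (τs θ))
    (hderiv : ∀ θb τb : ℝ, 0 < τb →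
      ![Real.cos θb, Real.sin θb] ⬝ᵥ (M τb).mulVec ![Real.cos θb, Real.sin θb] = 0 →
      deriv (fun τ => ![Real.cos θb, Real.sin θb] ⬝ᵥ
        (M τ).mulVec ![Real.cos θb, Real.sin θb]) τb ≠ 0) :
    ContDiff ℝ 1 τs :=
  contDiff_iff_contDiffAt.2 fun θ =>
    contDiffAt_of_isLeast_pos_zero (F := circleQuadForm M) one_ne_zero hτm.1.1
      (fun p hp => contDiffAt_circleQuadForm fun i j => (hanal i j p.2 hp.le).contDiffAt)
      (fun θ τ hτ => (circleQuadForm_neg (hnegdef τ hτ) θ).ne) hτs θ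
      (hderiv θ _ (hτs θ).1.1 (hτs θ).1.2)

/-- Under Assumption (A1) and boundedness of `τ_s`, if
`∂f_s/∂τ (θ̄, τ̄) ≠ 0` at every zero `(θ̄, τ̄)` of `f_s` with `τ̄ > 0`, then the
inter-event time function `τ_s : ℝ → (0, ∞)` is continuously differentiable on `ℝ`. -/
theorem ts_contDiff_of_deriv_ne_zero (M : ℝ → Matrix (Fin 2) (Fin 2) ℝ)
    (hsymm : ∀ τ, (M τ).IsSymm)
    (hanal : ∀ i j, AnalyticOnNhd ℝ (fun τ => M τ i j) (Set.Ici 0))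
    (τm : ℝ) (hτm : IsLeast {τ : ℝ | 0 < τ ∧ (M τ).det = 0} τm)
    (hnegdef : ∀ τ ∈ Set.Ioo 0 τm, (-(M τ)).PosDef)
    (τs : ℝ → ℝ)
    (hτs : ∀ θ : ℝ, IsLeast
      {τ : ℝ | 0 < τ ∧
        ![Real.cos θ, Real.sin θ] ⬝ᵥ (M τ).mulVec ![Real.cos θ, Real.sin θ] = 0} (τs θ))
    (τmax : ℝ) (hτmax : ∀ θ : ℝ, τs θ ≤ τmax)
    (hderiv : ∀ θb τb : ℝ, 0 < τb →
      ![Real.cos θb, Real.sin θb] ⬝ᵥ (M τb).mulVec ![Real.cos θb, Real.sin θb] = 0 →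
      deriv (fun τ => ![Real.cos θb, Real.sin θb] ⬝ᵥ
        (M τ).mulVec ![Real.cos θb, Real.sin θb]) τb ≠ 0) :
    ContDiff ℝ 1 τs :=
  ts_contDiff_of_deriv_ne_zero_general M hanal τm hτm hnegdef τs hτs hderiv
end

section
/- Suppose the inter-event time function τ_s is continuous and not constant on ℝ, M(τ) is not the zero matrix for any τ > 0, the 'angle' map φ induces a continuous map of the circle ℝ/2πℤ, and for each k ∈ {1, 2, 3, 4} the k-fold iterate φ^k has no fixed point on ℝ/2πℤ. Then for every θ₀ ∈ ℝ the sequence of inter-event times (τ_s(φ^k(θ₀)))_{k ∈ ℕ} does not converge; i.e., the inter-event times do not converge to a steady-state value for any initial state. -/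
/-!
If the inter-event times converged to `L`, a cluster point of the orbit on the compact circle would
have a whole forward orbit on which `τ_s = L`, so every point of that orbit is a zero on the unit
circle of the nonzero quadratic form `xᵀ M(L) x`. This form is affine in `(cos 2θ, sin 2θ)`, hence
has at most four zeros on the circle, and by pigeonhole two of the first five orbit points coincide:
some `φ^k` with `1 ≤ k ≤ 4` has a fixed point.
-/

open Matrix Real Filter Function Topology

theorem Function.exists_isPeriodicPt_of_iterate_mem_finset {X : Type*} {f : X → X}
    {S : Finset X} {n : ℕ} {x : X} (hS : S.card ≤ n) (hx : ∀ i ≤ n, f^[i] x ∈ S) :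
    ∃ k ∈ Finset.Icc 1 n, ∃ i, IsPeriodicPt f k (f^[i] x) := by
  obtain ⟨i, hi, j, hj, hne, hij⟩ := Finset.exists_ne_map_eq_of_card_lt_of_maps_to
    (s := Finset.range (n + 1)) (f := fun i => f^[i] x) (by simpa [Nat.lt_succ_iff])
    (fun i hi => hx i (Nat.lt_succ_iff.mp (Finset.mem_range.mp hi)))
  wlog hlt : i < j generalizing i j
  · exact this j hj i hi hne.symm hij.symm (by omega)
  have hjn : j < n + 1 := Finset.mem_range.mp hj
  refine ⟨j - i, Finset.mem_Icc.mpr ⟨by omega, by omega⟩, i, ?_⟩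
  show f^[j - i] (f^[i] x) = f^[i] x
  rw [← iterate_add_apply, Nat.sub_add_cancel hlt.le]
  exact hij.symm

theorem exists_forall_comp_iterate_eq_of_tendsto {X Y : Type*} [TopologicalSpace X]
    [CompactSpace X] [TopologicalSpace Y] [T2Space Y] {f : X → X} (hf : Continuous f)
    {g : X → Y} (hg : Continuous g) {x : X} {L : Y}
    (h : Tendsto (fun k => g (f^[k] x)) atTop (𝓝 L)) : ∃ y, ∀ i, g (f^[i] y) = L := by
  obtain ⟨y, hy⟩ := exists_clusterPt_of_compactSpace (map (fun k => f^[k] x) atTop)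
  refine ⟨y, fun i => ?_⟩
  have hcl : MapClusterPt ((g ∘ f^[i]) y) atTop ((g ∘ f^[i]) ∘ fun k => f^[k] x) :=
    MapClusterPt.continuousAt_comp (hg.comp (hf.iterate i)).continuousAt hy
  have hlim : Tendsto (fun k => g (f^[i] (f^[k] x))) atTop (𝓝 L) := by
    simpa only [comp_def, add_comm _ i, iterate_add_apply] using h.comp (tendsto_add_atTop_nat i)
  by_contra hne
  exact clusterPt_iff_not_disjoint.mp (ClusterPt.mono hcl hlim) (disjoint_nhds_nhds.mpr hne)

namespace Real.Angle

theorem mul_cos_add_mul_sin (B C : ℝ) (ψ : Angle) :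
    B * cos ψ + C * sin ψ = ‖(⟨B, C⟩ : ℂ)‖ * cos (ψ - (Complex.arg ⟨B, C⟩ : ℝ)) := by
  induction ψ using Real.Angle.induction_on with
  | h x =>
    have hB : ‖(⟨B, C⟩ : ℂ)‖ * Real.cos (Complex.arg ⟨B, C⟩) = B := Complex.norm_mul_cos_arg _
    have hC : ‖(⟨B, C⟩ : ℂ)‖ * Real.sin (Complex.arg ⟨B, C⟩) = C := Complex.norm_mul_sin_arg _
    rw [← coe_sub, cos_coe, cos_coe, sin_coe, Real.cos_sub]
    linear_combination -Real.cos x * hB - Real.sin x * hC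

theorem exists_finset_card_le_two_of_add_mul_cos_add_mul_sin_eq_zero {A B C : ℝ}
    (h : A ≠ 0 ∨ B ≠ 0 ∨ C ≠ 0) :
    ∃ S : Finset Angle, S.card ≤ 2 ∧ ∀ ψ, A + B * cos ψ + C * sin ψ = 0 → ψ ∈ S := by
  classical
  by_cases hzero : ∃ ψ₀, A + B * cos ψ₀ + C * sin ψ₀ = 0
  swap
  · push Not at hzero
    exact ⟨∅, by simp, fun ψ hψ => absurd hψ (hzero ψ)⟩
  obtain ⟨ψ₀, hψ₀⟩ := hzero
  have hBC : (⟨B, C⟩ : ℂ) ≠ 0 := by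
    rintro hz
    obtain ⟨rfl, rfl⟩ : B = 0 ∧ C = 0 := Complex.ext_iff.mp hz
    simp_all
  set β : Angle := ((Complex.arg ⟨B, C⟩ : ℝ) : Angle)
  refine ⟨{ψ₀, β + β - ψ₀}, Finset.card_le_two, fun ψ hψ => ?_⟩
  have hcos : cos (ψ - β) = cos (ψ₀ - β) := by
    refine mul_left_cancel₀ (norm_ne_zero_iff.mpr hBC) ?_
    rw [← mul_cos_add_mul_sin, ← mul_cos_add_mul_sin]
    linarith
  rcases cos_eq_iff_eq_or_eq_neg.mp hcos with h | h
  · simp [sub_left_injective h]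
  · have hψ : ψ = β + β - ψ₀ := by rw [sub_eq_iff_eq_add.mp h]; abel
    simp [hψ]

theorem exists_finset_card_le_of_two_zsmul_mem (T : Finset Angle) :
    ∃ S : Finset Angle, S.card ≤ 2 * T.card ∧ ∀ θ : Angle, (2 : ℤ) • θ ∈ T → θ ∈ S := by
  classical
  refine ⟨T.biUnion fun ψ => {((ψ.toReal / 2 : ℝ) : Angle), ((ψ.toReal / 2 : ℝ) : Angle) + π},
    ?_, ?_⟩
  · rw [mul_comm]
    exact Finset.card_biUnion_le_card_mul _ _ _ fun _ _ => Finset.card_le_two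
  · intro θ hθ
    refine Finset.mem_biUnion.mpr ⟨_, hθ, ?_⟩
    have : (2 : ℤ) • θ = (2 : ℤ) • ((((2 : ℤ) • θ).toReal / 2 : ℝ) : Angle) := by
      rw [two_zsmul_coe_div_two, coe_toReal]
    simpa using two_zsmul_eq_iff.mp this

instance : CompactSpace Angle :=
  haveI : Fact (0 < 2 * π) := ⟨two_pi_pos⟩
  inferInstanceAs (CompactSpace (AddCircle (2 * π)))

end Real.Angle

theorem Matrix.cos_sin_dotProduct_mulVec (N : Matrix (Fin 2) (Fin 2) ℝ) (θ : ℝ) :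
    ![cos θ, sin θ] ⬝ᵥ N *ᵥ ![cos θ, sin θ] =
      (N 0 0 + N 1 1) / 2 + (N 0 0 - N 1 1) / 2 * cos (2 * θ) +
        (N 0 1 + N 1 0) / 2 * sin (2 * θ) := by
  simp only [dotProduct, mulVec, Fin.sum_univ_two, Matrix.cons_val_zero, Matrix.cons_val_one,
    cos_two_mul, sin_two_mul]
  linear_combination N 1 1 * cos_sq_add_sin_sq θ

theorem Matrix.IsSymm.exists_finset_card_le_four_of_cos_sin_dotProduct_mulVec_eq_zero
    {N : Matrix (Fin 2) (Fin 2) ℝ} (hN : N.IsSymm) (hN0 : N ≠ 0) :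
    ∃ S : Finset Angle, S.card ≤ 4 ∧
      ∀ θ : ℝ, ![cos θ, sin θ] ⬝ᵥ N *ᵥ ![cos θ, sin θ] = 0 → (θ : Angle) ∈ S := by
  have hcoeff :
      (N 0 0 + N 1 1) / 2 ≠ 0 ∨ (N 0 0 - N 1 1) / 2 ≠ 0 ∨ (N 0 1 + N 1 0) / 2 ≠ 0 := by
    by_contra! h
    have h10 : N 1 0 = N 0 1 := hN.apply 0 1
    exact hN0 <| Matrix.ext fun i j => by fin_cases i <;> fin_cases j <;> simp <;> linarith
  obtain ⟨T, hT, hTmem⟩ :=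
    Angle.exists_finset_card_le_two_of_add_mul_cos_add_mul_sin_eq_zero hcoeff
  obtain ⟨S, hS, hSmem⟩ := Angle.exists_finset_card_le_of_two_zsmul_mem T
  refine ⟨S, by omega, fun θ hθ => hSmem _ (hTmem _ ?_)⟩
  rwa [← Angle.coe_zsmul, zsmul_eq_mul, Int.cast_two, Angle.cos_coe, Angle.sin_coe,
    ← cos_sin_dotProduct_mulVec]

theorem iet_do_not_converge_general (M : ℝ → Matrix (Fin 2) (Fin 2) ℝ)
    (hsymm : ∀ τ, (M τ).IsSymm)
    (hM0 : ∀ τ : ℝ, 0 < τ → M τ ≠ 0)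
    (τs : ℝ → ℝ)
    (hτs : ∀ θ : ℝ, IsLeast
      {τ : ℝ | 0 < τ ∧
        ![Real.cos θ, Real.sin θ] ⬝ᵥ (M τ).mulVec ![Real.cos θ, Real.sin θ] = 0} (τs θ))
    (hcont : Continuous τs)
    (φ : ℝ → ℝ)
    (hφcont : Continuous φ)
    (hφcircle : ∀ θ : ℝ, ∃ n : ℤ, φ (θ + 2 * π) = φ θ + 2 * π * n)
    (hnofix : ∀ k : ℕ, k ∈ Finset.Icc 1 4 → ∀ θ : ℝ, ¬ ∃ n : ℤ, φ^[k] θ = θ + 2 * π * n) :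
    ∀ θ₀ : ℝ, ¬ ∃ L : ℝ, Tendsto (fun k : ℕ => τs (φ^[k] θ₀)) atTop (nhds L) := by
  rintro θ₀ ⟨L, hL⟩
  have hτper : Periodic τs (2 * π) := fun θ =>
    (hτs (θ + 2 * π)).unique (by simpa only [cos_add_two_pi, sin_add_two_pi] using hτs θ)
  have hφper : Periodic (fun θ => (φ θ : Angle)) (2 * π) := fun θ => by
    obtain ⟨n, hn⟩ := hφcircle θ
    exact Angle.angle_eq_iff_two_pi_dvd_sub.mpr ⟨n, by rw [hn]; ring⟩
  let Φ : Angle → Angle := hφper.lift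
  have hsemi : Semiconj ((↑) : ℝ → Angle) φ Φ := fun _ => rfl
  have hΦ : ∀ k (θ : ℝ), Φ^[k] θ = φ^[k] θ := fun k θ =>
    ((hsemi.iterate_right k).eq θ).symm
  let τ' : Angle → ℝ := hτper.lift
  have hτ' : ∀ θ : ℝ, τ' θ = τs θ := fun _ => rfl
  have hΦc : Continuous Φ := (Angle.continuous_coe.comp hφcont).quotient_liftOn' _
  have hτc : Continuous τ' := hcont.quotient_liftOn' _
  obtain ⟨y, hy⟩ := exists_forall_comp_iterate_eq_of_tendsto hΦc hτc (x := θ₀)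
    (by simpa only [hΦ, hτ'] using hL)
  obtain ⟨θ, rfl⟩ : ∃ θ : ℝ, (θ : Angle) = y := QuotientAddGroup.mk_surjective y
  have hτ : ∀ i, τs (φ^[i] θ) = L := fun i => by simpa only [hΦ, hτ'] using hy i
  have hL0 : 0 < L := hτ 0 ▸ (hτs θ).1.1
  obtain ⟨S, hS, hSmem⟩ :=
    (hsymm L).exists_finset_card_le_four_of_cos_sin_dotProduct_mulVec_eq_zero (hM0 L hL0)
  obtain ⟨k, hk, i, hki⟩ := exists_isPeriodicPt_of_iterate_mem_finset (f := Φ) (x := θ) hS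
    fun i _ => hΦ i θ ▸ hSmem _ (hτ i ▸ (hτs _).1.2)
  rw [IsPeriodicPt, IsFixedPt, hΦ, hΦ, Angle.angle_eq_iff_two_pi_dvd_sub] at hki
  obtain ⟨n, hn⟩ := hki
  exact hnofix k hk _ ⟨n, by linarith⟩

/-- Suppose the inter-event time function `τ_s` is continuous and not
constant, `M(τ) ≠ 0` for every `τ > 0`, the "angle" map `φ` induces a continuous map of
the circle `ℝ/2πℤ`, and `φ^k` has no fixed point on the circle for `k ∈ {1, 2, 3, 4}`.
Then for every initial angle the sequence of inter-event times `τ_s(φ^k(θ₀))` does not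
converge. -/
theorem iet_do_not_converge (M : ℝ → Matrix (Fin 2) (Fin 2) ℝ)
    (hsymm : ∀ τ, (M τ).IsSymm)
    (hM0 : ∀ τ : ℝ, 0 < τ → M τ ≠ 0)
    (G : ℝ → Matrix (Fin 2) (Fin 2) ℝ)
    (τs : ℝ → ℝ)
    (hτs : ∀ θ : ℝ, IsLeast
      {τ : ℝ | 0 < τ ∧
        ![Real.cos θ, Real.sin θ] ⬝ᵥ (M τ).mulVec ![Real.cos θ, Real.sin θ] = 0} (τs θ))
    (hcont : Continuous τs)
    (hnonconst : ∃ θ₁ θ₂ : ℝ, τs θ₁ ≠ τs θ₂)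
    (φ : ℝ → ℝ)
    (hangle : ∀ θ : ℝ, ∃ r : ℝ, 0 < r ∧
      (G (τs θ)).mulVec ![Real.cos θ, Real.sin θ] = r • ![Real.cos (φ θ), Real.sin (φ θ)])
    (hφcont : Continuous φ)
    (hφcircle : ∀ θ : ℝ, ∃ n : ℤ, φ (θ + 2 * π) = φ θ + 2 * π * n)
    (hnofix : ∀ k : ℕ, k ∈ Finset.Icc 1 4 → ∀ θ : ℝ, ¬ ∃ n : ℤ, φ^[k] θ = θ + 2 * π * n) :
    ∀ θ₀ : ℝ, ¬ ∃ L : ℝ, Tendsto (fun k : ℕ => τs (φ^[k] θ₀)) atTop (nhds L) :=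
  iet_do_not_converge_general M hsymm hM0 τs hτs hcont φ hφcont hφcircle hnofix
end

section
/- Let φ : ℝ → ℝ be continuous and let θ* ∈ (θ̄₁, θ̄₂) satisfy φ(θ*) = θ*. Suppose: (i) φ(θ) > θ for all θ ∈ M₁ := [θ̄₁, θ*); (ii) φ(θ) < θ for all θ ∈ M₂ := (θ*, θ̄₂]; (iii) φ²(θ) > θ for all θ ∈ M₁; and (iv) [θ̄₁, θ̄₂] is positively invariant under φ, i.e., φ([θ̄₁, θ̄₂]) ⊆ [θ̄₁, θ̄₂]. Then θ* is an asymptotically stable fixed point of the dynamics θ_{k+1} = φ(θ_k), and for every θ₀ ∈ [θ̄₁, θ̄₂] the iterates φ^k(θ₀) converge to θ* as k → ∞ (so [θ̄₁, θ̄₂] is contained in the region of convergence of θ*). -/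
/-!
Write `u` for the fixed point and `[a, b]` for the invariant interval. Hypotheses (ii) and (iii)
leave `u` as the only fixed point of `φ ∘ φ` in `[a, b]`; since `φ (φ b) ≤ b`, the intermediate
value theorem then gives `φ (φ y) < y` on `(u, b]`. Applying the intermediate value theorem to `φ`
on `[u, y]`, it follows that `v < φ y` whenever `v < u ≤ y ≤ φ v`.

Stability: for `p < u` close to `u`, the interval from `p` to the maximum of `φ` on `[p, u]`
(enlarged a little to the right of `u`) is `φ`-invariant by that inequality. Convergence: the
cluster set `L` of an orbit is compact with `φ L = L`. Writing its extreme points as `φ p` and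
`φ q` with `p, q ∈ L`, hypotheses (i) and (ii) force `q ≤ u ≤ p`, and the inequality rules out
`q < u < p`; hence `L = {u}`.
-/

open Filter Set Topology Metric

theorem Filter.map_map_iterate_atTop {α : Type*} (f : α → α) (x : α) :
    map f (map (fun k => f^[k] x) atTop) = map (fun k => f^[k] x) atTop := by
  conv_rhs => rw [← map_add_atTop_eq_nat 1, map_map]
  rw [map_map]
  congr 1
  funext k
  exact (Function.iterate_succ_apply' f k x).symm

theorem surjOn_setOf_clusterPt_of_map_eq {X : Type*} [TopologicalSpace X] [T2Space X]
    {f : X → X} (hf : Continuous f) {F : Filter X} (hF : map f F = F) {K : Set X}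
    (hK : IsCompact K) (hKF : K ∈ F) :
    SurjOn f {c | ClusterPt c F} {c | ClusterPt c F} := by
  intro c hc
  have hG : (F ⊓ comap f (𝓝 c)).NeBot := by
    rw [← map_neBot_iff f, Filter.push_pull, hF, inf_comm]
    exact hc
  obtain ⟨p, -, hp⟩ := hK (f := F ⊓ comap f (𝓝 c)) (inf_le_left.trans (le_principal_iff.2 hKF))
  exact ⟨p, hp.mono inf_le_left,
    eq_of_nhds_neBot (hp.map hf.continuousAt (tendsto_comap.mono_left inf_le_right))⟩

theorem exists_forall_iterate_dist_lt {X : Type*} [PseudoMetricSpace X] {f : X → X} {x : X}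
    (h : ∀ ε > 0, ∃ s ∈ 𝓝 x, s ⊆ ball x ε ∧ MapsTo f s s) {ε : ℝ} (hε : 0 < ε) :
    ∃ δ > 0, ∀ y, dist y x < δ → ∀ k, dist (f^[k] y) x < ε := by
  obtain ⟨s, hs, hsε, hfs⟩ := h ε hε
  obtain ⟨δ, hδ, hδs⟩ := Metric.mem_nhds_iff.1 hs
  exact ⟨δ, hδ, fun y hy k => hsε (hfs.iterate k (hδs hy))⟩

namespace StableFixedPoint

variable {φ : ℝ → ℝ} {a b u : ℝ}

theorem eq_of_apply_apply_eq (hfix : φ u = u) (h2 : ∀ θ ∈ Ioc u b, φ θ < θ)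
    (h3 : ∀ θ ∈ Ico a u, θ < φ (φ θ)) (h4 : MapsTo φ (Icc a b) (Icc a b)) {w : ℝ}
    (hw : w ∈ Icc a b) (hw2 : φ (φ w) = w) : w = u := by
  rcases lt_trichotomy w u with hwu | rfl | huw
  · exact absurd hw2 (h3 w ⟨hw.1, hwu⟩).ne'
  · rfl
  · have hφw : φ w ≤ u := not_lt.1 fun h =>
      (h2 (φ w) ⟨h, (h4 hw).2⟩).not_ge ((h2 w ⟨huw, hw.2⟩).le.trans hw2.ge)
    rcases hφw.lt_or_eq with hlt | heq
    · exact ((h3 (φ w) ⟨(h4 hw).1, hlt⟩).ne' (congrArg φ hw2)).elim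
    · rw [heq, hfix] at hw2
      exact hw2.symm

theorem apply_apply_lt (hφ : Continuous φ) (hfix : φ u = u) (h2 : ∀ θ ∈ Ioc u b, φ θ < θ)
    (h3 : ∀ θ ∈ Ico a u, θ < φ (φ θ)) (h4 : MapsTo φ (Icc a b) (Icc a b)) {y : ℝ}
    (hy : y ∈ Icc a b) (huy : u < y) : φ (φ y) < y := by
  by_contra! hle
  have hb : b ∈ Icc a b := ⟨hy.1.trans hy.2, le_rfl⟩
  obtain ⟨w, hw, hw0⟩ : ∃ w ∈ Icc y b, φ (φ w) - w = 0 :=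
    intermediate_value_Icc' hy.2 ((hφ.comp hφ).sub continuous_id).continuousOn
      ⟨sub_nonpos.2 (h4 (h4 hb)).2, sub_nonneg.2 hle⟩
  have hwu := eq_of_apply_apply_eq hfix h2 h3 h4 ⟨hy.1.trans hw.1, hw.2⟩ (sub_eq_zero.1 hw0)
  linarith [hw.1]

theorem lt_apply_of_le_apply (hφ : Continuous φ) (hfix : φ u = u)
    (h2 : ∀ θ ∈ Ioc u b, φ θ < θ) (h3 : ∀ θ ∈ Ico a u, θ < φ (φ θ))
    (h4 : MapsTo φ (Icc a b) (Icc a b)) {v y : ℝ} (hv : v ∈ Icc a b) (hvu : v < u)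
    (huy : u ≤ y) (hyv : y ≤ φ v) : v < φ y := by
  by_contra! hle
  obtain ⟨c, hc, hcv⟩ : ∃ c ∈ Icc u y, φ c = v :=
    intermediate_value_Icc' huy hφ.continuousOn ⟨hle, hfix.symm ▸ hvu.le⟩
  have huc : u < c := hc.1.lt_of_ne (by rintro rfl; exact hvu.ne (hcv ▸ hfix))
  have hcb : c ≤ b := hc.2.trans (hyv.trans (h4 hv).2)
  have := apply_apply_lt hφ hfix h2 h3 h4 ⟨hv.1.trans (hvu.trans huc).le, hcb⟩ huc
  rw [hcv] at this
  linarith [hc.2]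

theorem mapsTo_Icc_max (hφ : Continuous φ) (hfix : φ u = u) (h1 : ∀ θ ∈ Ico a u, θ < φ θ)
    (h2 : ∀ θ ∈ Ioc u b, φ θ < θ) (h3 : ∀ θ ∈ Ico a u, θ < φ (φ θ))
    (h4 : MapsTo φ (Icc a b) (Icc a b)) {p r v : ℝ} (hap : a ≤ p) (hur : u ≤ r) (hrb : r ≤ b)
    (hv : v ∈ Icc p u) (hmax : IsMaxOn φ (Icc p u) v) (hr : ∀ t ∈ Icc u r, p ≤ φ t) :
    MapsTo φ (Icc p (max (φ v) r)) (Icc p (max (φ v) r)) := by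
  have hvab : v ∈ Icc a b := ⟨hap.trans hv.1, hv.2.trans (hur.trans hrb)⟩
  intro t ⟨hpt, htq⟩
  rcases lt_or_ge t u with htu | hut
  · exact ⟨hpt.trans (h1 t ⟨hap.trans hpt, htu⟩).le, (hmax ⟨hpt, htu.le⟩).trans (le_max_left _ _)⟩
  have htb : t ≤ b := htq.trans (max_le (h4 hvab).2 hrb)
  have hφt : φ t ≤ t := hut.eq_or_lt.elim (fun h => (h ▸ hfix).le) fun h => (h2 t ⟨h, htb⟩).le
  refine ⟨?_, hφt.trans htq⟩
  rcases le_or_gt t r with htr | hrt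
  · exact hr t ⟨hut, htr⟩
  have htv : t ≤ φ v := (le_max_iff.1 htq).resolve_right hrt.not_ge
  have hvu : v < u := hv.2.lt_of_ne (by rintro rfl; linarith [hfix ▸ htv])
  exact hv.1.trans (lt_apply_of_le_apply hφ hfix h2 h3 h4 hvab hvu hut htv).le

theorem exists_mapsTo_mem_nhds_subset_ball (hφ : Continuous φ) (hmem : u ∈ Ioo a b)
    (hfix : φ u = u) (h1 : ∀ θ ∈ Ico a u, θ < φ θ) (h2 : ∀ θ ∈ Ioc u b, φ θ < θ)
    (h3 : ∀ θ ∈ Ico a u, θ < φ (φ θ)) (h4 : MapsTo φ (Icc a b) (Icc a b)) {ε : ℝ}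
    (hε : 0 < ε) : ∃ s ∈ 𝓝 u, s ⊆ ball u ε ∧ MapsTo φ s s := by
  rw [Real.ball_eq_Ioo]
  have hφu : Tendsto φ (𝓝 u) (𝓝 u) := hφ.tendsto' u u hfix
  have hK : Icc a b ∩ Ioo (u - ε) (u + ε) ∈ 𝓝 u :=
    inter_mem (Icc_mem_nhds hmem.1 hmem.2) (Ioo_mem_nhds (by linarith) (by linarith))
  obtain ⟨p, hpu, hp⟩ := mem_nhdsLE_iff_exists_Icc_subset.1 <| nhdsWithin_le_nhds <|
    inter_mem hK (hφu (Ioo_mem_nhds (by linarith : u - ε < u) (by linarith : u < u + ε)))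
  obtain ⟨r, hur, hr⟩ := mem_nhdsGE_iff_exists_Icc_subset.1 <| nhdsWithin_le_nhds <|
    inter_mem hK (hφu (Ioi_mem_nhds hpu))
  obtain ⟨v, hv, hmax⟩ := isCompact_Icc.exists_isMaxOn (nonempty_Icc.2 hpu.le) hφ.continuousOn
  have hpK := (hp ⟨le_rfl, hpu.le⟩).1
  have hrK := (hr ⟨hur.le, le_rfl⟩).1
  refine ⟨Icc p (max (φ v) r), Icc_mem_nhds hpu (hur.trans_le (le_max_right _ _)),
    ordConnected_Ioo.out hpK.2 ?_, mapsTo_Icc_max hφ hfix h1 h2 h3 h4 hpK.1.1 hur.le hrK.1.2 hv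
      hmax fun t ht => (hr ht).2.le⟩
  rcases max_choice (φ v) r with h | h <;> rw [h]
  exacts [(hp hv).2, hrK.2]

theorem subset_singleton_of_surjOn (hφ : Continuous φ) (hfix : φ u = u)
    (h1 : ∀ θ ∈ Ico a u, θ < φ θ) (h2 : ∀ θ ∈ Ioc u b, φ θ < θ)
    (h3 : ∀ θ ∈ Ico a u, θ < φ (φ θ)) (h4 : MapsTo φ (Icc a b) (Icc a b)) {L : Set ℝ}
    (hL : IsCompact L) (hLab : L ⊆ Icc a b) (hsurj : SurjOn φ L L) : L ⊆ {u} := by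
  intro c hc
  obtain ⟨m, hmL, hm⟩ := hL.exists_isLeast ⟨c, hc⟩
  obtain ⟨S, hSL, hS⟩ := hL.exists_isGreatest ⟨c, hc⟩
  obtain ⟨p, hpL, rfl⟩ := hsurj hmL
  obtain ⟨q, hqL, rfl⟩ := hsurj hSL
  have hup : u ≤ p := not_lt.1 fun hpu => (h1 p ⟨(hLab hpL).1, hpu⟩).not_ge (hm hpL)
  have hqu : q ≤ u := not_lt.1 fun huq => (h2 q ⟨huq, (hLab hqL).2⟩).not_ge (hS hqL)
  have hpq : p = u ∨ q = u := by
    by_contra! hne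
    exact (lt_apply_of_le_apply hφ hfix h2 h3 h4 (hLab hqL) (hqu.lt_of_ne hne.2) hup
      (hS hpL)).not_ge (hm hqL)
  obtain ⟨hp, hq⟩ : p = u ∧ q = u := by
    rcases hpq with hp | hq
    · refine ⟨hp, le_antisymm hqu ?_⟩
      simpa only [hp, hfix] using hm hqL
    · refine ⟨le_antisymm ?_ hup, hq⟩
      simpa only [hq, hfix] using hS hpL
  have hmc := hm hc
  have hcS := hS hc
  rw [hp, hfix] at hmc
  rw [hq, hfix] at hcS
  exact le_antisymm hcS hmc

theorem tendsto_iterate (hφ : Continuous φ) (hfix : φ u = u) (h1 : ∀ θ ∈ Ico a u, θ < φ θ)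
    (h2 : ∀ θ ∈ Ioc u b, φ θ < θ) (h3 : ∀ θ ∈ Ico a u, θ < φ (φ θ))
    (h4 : MapsTo φ (Icc a b) (Icc a b)) {θ₀ : ℝ} (hθ₀ : θ₀ ∈ Icc a b) :
    Tendsto (fun k => φ^[k] θ₀) atTop (𝓝 u) := by
  set F := map (fun k => φ^[k] θ₀) atTop
  have hKF : Icc a b ∈ F := mem_map.2 (univ_mem' fun k => h4.iterate k hθ₀)
  have hLK : {c | ClusterPt c F} ⊆ Icc a b := fun c hc =>
    isClosed_Icc.closure_subset (mem_closure_iff_clusterPt.2 (hc.mono (le_principal_iff.2 hKF)))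
  have hL := subset_singleton_of_surjOn hφ hfix h1 h2 h3 h4
    (isCompact_Icc.of_isClosed_subset isClosed_setOfPred_clusterPt hLK) hLK
    (surjOn_setOf_clusterPt_of_map_eq hφ (map_map_iterate_atTop φ θ₀) isCompact_Icc hKF)
  exact isCompact_Icc.le_nhds_of_unique_clusterPt hKF fun c _ hc => hL hc

end StableFixedPoint

/-- Sufficient condition for asymptotic stability of a fixed point of
the "angle" map: if `φ` is continuous, `θ* ∈ (θ̄₁, θ̄₂)` is a fixed point,
`φ(θ) > θ` on `[θ̄₁, θ*)`, `φ(θ) < θ` on `(θ*, θ̄₂]`, `φ²(θ) > θ` on `[θ̄₁, θ*)`, and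
`[θ̄₁, θ̄₂]` is positively invariant under `φ`, then `θ*` is an asymptotically stable
fixed point and every orbit starting in `[θ̄₁, θ̄₂]` converges to `θ*`. -/
theorem asymptotically_stable_fixed_point (φ : ℝ → ℝ) (hφ : Continuous φ)
    (θb₁ θb₂ θs : ℝ) (hmem : θs ∈ Set.Ioo θb₁ θb₂) (hfix : φ θs = θs)
    (h1 : ∀ θ ∈ Set.Ico θb₁ θs, θ < φ θ)
    (h2 : ∀ θ ∈ Set.Ioc θs θb₂, φ θ < θ)
    (h3 : ∀ θ ∈ Set.Ico θb₁ θs, θ < φ^[2] θ)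
    (h4 : Set.MapsTo φ (Set.Icc θb₁ θb₂) (Set.Icc θb₁ θb₂)) :
    (∀ ε > 0, ∃ δ > 0, ∀ θ₀ : ℝ, |θ₀ - θs| < δ → ∀ k : ℕ, |φ^[k] θ₀ - θs| < ε) ∧
    (∀ θ₀ ∈ Set.Icc θb₁ θb₂, Tendsto (fun k : ℕ => φ^[k] θ₀) atTop (nhds θs)) := by
  refine ⟨fun ε hε => ?_, fun θ₀ => StableFixedPoint.tendsto_iterate hφ hfix h1 h2 h3 h4⟩
  simpa only [Real.dist_eq] using exists_forall_iterate_dist_lt (fun ε hε =>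
    StableFixedPoint.exists_mapsTo_mem_nhds_subset_ball hφ hmem hfix h1 h2 h3 h4 hε) hε
end

section
/- Let φ : ℝ → ℝ be continuous and let θ* be an isolated fixed point of φ. Suppose: (i) there exists a neighborhood of θ* on which the function θ ↦ φ(θ) − θ is non-increasing (respectively, strictly decreasing); and (ii) there exists θ̄ < θ* such that φ²(θ) ≥ θ (respectively, φ²(θ) > θ) for all θ ∈ [θ̄, θ*). Then θ* is a Lyapunov stable (respectively, asymptotically stable) fixed point of the dynamics θ_{k+1} = φ(θ_k). -/
/-!
Near `θs` the map pushes points towards `θs` from both sides (`φ θ - θ` changes sign there), and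
the condition on `φ²` prevents an overshoot to the right from throwing an orbit further left than
where it started. Hence for suitable `a < θs` arbitrarily close to `θs` the interval
`[a, max φ([a, θs])]`, slightly enlarged on the right, is `φ`-invariant: Lyapunov stability.
In the strict case an orbit in such an interval has a compact set of cluster points `Ω ⊆ φ(Ω)`;
comparing `min Ω` and `max Ω` with their preimages in `Ω` forces `Ω = {θs}`.
-/

open Filter Set Topology

def IsLyapunovStable {X : Type*} [PseudoMetricSpace X] (f : X → X) (x : X) : Prop :=
  ∀ ε > 0, ∃ δ > 0, ∀ y, dist y x < δ → ∀ k : ℕ, dist (f^[k] y) x < ε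

theorem isLyapunovStable_of_mapsTo {X : Type*} [PseudoMetricSpace X] {f : X → X} {x : X}
    (h : ∀ ε > 0, ∃ s ∈ 𝓝 x, s ⊆ Metric.ball x ε ∧ MapsTo f s s) : IsLyapunovStable f x := by
  intro ε hε
  obtain ⟨s, hs, hsε, hf⟩ := h ε hε
  obtain ⟨δ, hδ, hδs⟩ := Metric.mem_nhds_iff.1 hs
  exact ⟨δ, hδ, fun y hy k => hsε (hf.iterate k (hδs hy))⟩

theorem exists_mapClusterPt_apply_eq {X : Type*} [TopologicalSpace X] [T2Space X] {f : X → X}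
    (hf : Continuous f) {K : Set X} (hK : IsCompact K) {x y : X} (hx : ∀ k, f^[k] x ∈ K)
    (hy : MapClusterPt y atTop (f^[·] x)) :
    ∃ w ∈ K, MapClusterPt w atTop (f^[·] x) ∧ f w = y := by
  have hy' : MapClusterPt y atTop ((f^[·] x) ∘ (· + 1)) := by
    rwa [mapClusterPt_comp, map_add_atTop_eq_nat]
  simp only [Function.comp_def, Function.iterate_succ_apply'] at hy'
  obtain ⟨U, hU, hUy⟩ := mapClusterPt_iff_ultrafilter.1 hy'
  obtain ⟨w, hwK, hw⟩ := hK.ultrafilter_le_nhds' (U.map (f^[·] x))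
    (Ultrafilter.mem_map.2 (univ_mem' hx))
  exact ⟨w, hwK, mapClusterPt_iff_ultrafilter.2 ⟨U, hU, hw⟩,
    tendsto_nhds_unique ((hf.tendsto w).comp hw) hUy⟩

section Real

variable {φ : ℝ → ℝ} {θs : ℝ}

theorem mapsTo_Icc_of_bounds {a b : ℝ} (hfix : φ θs = θs) (hθs : θs ∈ Icc a b)
    (hleft : ∀ z ∈ Ico a θs, z ≤ φ z ∧ φ z ≤ b) (hright : ∀ z ∈ Ioc θs b, a ≤ φ z ∧ φ z ≤ z) :
    MapsTo φ (Icc a b) (Icc a b) := by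
  intro z ⟨haz, hzb⟩
  rcases lt_trichotomy z θs with hz | rfl | hz
  · exact ⟨haz.trans (hleft z ⟨haz, hz⟩).1, (hleft z ⟨haz, hz⟩).2⟩
  · rwa [hfix]
  · exact ⟨(hright z ⟨hz, hzb⟩).1, (hright z ⟨hz, hzb⟩).2.trans hzb⟩

/-- A point `z` of `[θs, φ u]` is `φ w` for some `w ∈ [u, θs]`, so `φ z = φ (φ w) ≥ w ≥ u`. -/
theorem le_apply_of_mem_Icc_apply {u z : ℝ} (hφ : ContinuousOn φ (Icc u θs)) (hfix : φ θs = θs)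
    (hu : u ≤ θs) (hsq : ∀ w ∈ Icc u θs, w < θs → w ≤ φ (φ w)) (hz : z ∈ Icc θs (φ u)) :
    u ≤ φ z := by
  obtain ⟨w, hw, rfl⟩ := intermediate_value_Icc' hu hφ (by rwa [hfix])
  rcases hw.2.lt_or_eq with hwθ | rfl
  · exact hw.1.trans (hsq w hw hwθ)
  · rwa [hfix, hfix]

theorem exists_mapsTo_Icc_subset (hφ : Continuous φ) (hfix : φ θs = θs) {s : Set ℝ}
    (hs : s ∈ 𝓝 θs) (hleft : ∀ z ∈ s, z < θs → z ≤ φ z) (hright : ∀ z ∈ s, θs < z → φ z ≤ z)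
    (hsq : ∀ z ∈ s, z < θs → z ≤ φ (φ z)) :
    ∃ a b, Icc a b ∈ 𝓝 θs ∧ Icc a b ⊆ s ∧ MapsTo φ (Icc a b) (Icc a b) := by
  -- `φ` maps `[a, θs]` into `[l, u] ⊆ s` and `[θs, e]` into `[a, c]`; then `b := max M e`, where
  -- `M = φ xm` is the maximum of `φ` on `[a, θs]`.
  have hpre : ∀ {t}, t ∈ 𝓝 θs → φ ⁻¹' t ∈ 𝓝 θs := fun ht =>
    hφ.continuousAt.preimage_mem_nhds (by rwa [hfix])
  obtain ⟨l, u, -, hlu, hlus⟩ := exists_Icc_mem_subset_of_mem_nhds hs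
  obtain ⟨a, c, ⟨haθ, hθc⟩, hac, hac_sub⟩ :=
    exists_Icc_mem_subset_of_mem_nhds (inter_mem hlu (hpre hlu))
  obtain ⟨xm, hxm, hmax⟩ := isCompact_Icc.exists_isMaxOn (nonempty_Icc.2 haθ)
    hφ.continuousOn
  have hθM : θs ≤ φ xm := hfix ▸ hmax (right_mem_Icc.2 haθ)
  obtain ⟨d, e, ⟨hdθ, hθe⟩, hde, hde_sub⟩ :=
    exists_Icc_mem_subset_of_mem_nhds (inter_mem hlu (hpre hac))
  have hac_left : ∀ z ∈ Icc a θs, z ∈ Icc a c := fun z hz => ⟨hz.1, hz.2.trans hθc⟩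
  have hla : l ≤ a := (hac_sub (left_mem_Icc.2 (haθ.trans hθc))).1.1
  set b := max (φ xm) e
  have hθb : θs ≤ b := le_max_of_le_left hθM
  have hbu : b ≤ u :=
    max_le (hac_sub (hac_left xm hxm)).2.2 (hde_sub (right_mem_Icc.2 (hdθ.trans hθe))).1.2
  have hsub : Icc a b ⊆ s := fun z hz => hlus ⟨hla.trans hz.1, hz.2.trans hbu⟩
  refine ⟨a, b, mem_of_superset (inter_mem hac hde) fun z hz => ?_, hsub,
    mapsTo_Icc_of_bounds hfix ⟨haθ, hθb⟩ (fun z hz => ?_) (fun z hz => ?_)⟩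
  · exact ⟨hz.1.1, le_max_of_le_right hz.2.2⟩
  · exact ⟨hleft z (hsub ⟨hz.1, hz.2.le.trans hθb⟩) hz.2,
      le_max_of_le_left (hmax (Ico_subset_Icc_self hz))⟩
  · refine ⟨?_, hright z (hsub ⟨haθ.trans hz.1.le, hz.2⟩) hz.1⟩
    rcases le_or_gt z (φ xm) with hzM | hzM
    · refine hxm.1.trans (le_apply_of_mem_Icc_apply hφ.continuousOn hfix hxm.2
        (fun w hw => hsq w (hlus (hac_sub (hac_left w ⟨hxm.1.trans hw.1, hw.2⟩)).1))
        ⟨hz.1.le, hzM⟩)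
    · exact (hde_sub ⟨hdθ.trans hz.1.le, (le_max_iff.1 hz.2).resolve_left hzM.not_ge⟩).2.1

theorem isLyapunovStable_of_eventually (hφ : Continuous φ) (hfix : φ θs = θs)
    (h : ∀ᶠ z in 𝓝 θs, (z < θs → z ≤ φ z) ∧ (θs < z → φ z ≤ z) ∧ (z < θs → z ≤ φ (φ z))) :
    IsLyapunovStable φ θs := by
  refine isLyapunovStable_of_mapsTo fun ε hε => ?_
  obtain ⟨a, b, hab, hsub, hmaps⟩ := exists_mapsTo_Icc_subset hφ hfix
    (h.and (Metric.ball_mem_nhds θs hε)) (fun z hz => hz.1.1) (fun z hz => hz.1.2.1)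
    (fun z hz => hz.1.2.2)
  exact ⟨Icc a b, hab, fun z hz => (hsub hz).2, hmaps⟩

theorem subset_singleton_of_subset_image {a b : ℝ} {Ω : Set ℝ} (hΩ : IsCompact Ω)
    (hΩab : Ω ⊆ Icc a b) (hinv : Ω ⊆ φ '' Ω) (hφ : ContinuousOn φ (Icc a b))
    (hfix : φ θs = θs) (hleft : ∀ z ∈ Icc a b, z < θs → z < φ z)
    (hright : ∀ z ∈ Icc a b, θs < z → φ z < z) (hsq : ∀ z ∈ Icc a b, z < θs → z < φ (φ z)) :
    Ω ⊆ {θs} := by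
  intro y hy
  obtain ⟨m, hmΩ, hm⟩ := hΩ.exists_isLeast ⟨y, hy⟩
  obtain ⟨M, hMΩ, hM⟩ := hΩ.exists_isGreatest ⟨y, hy⟩
  obtain ⟨t, htΩ, htM⟩ := hinv hMΩ
  have htθ : t ≤ θs := not_lt.1 fun hθt =>
    (hright t (hΩab htΩ) hθt).not_ge (htM ▸ hM htΩ)
  have hθm : θs ≤ m := by
    by_contra! hmθ
    obtain ⟨w, hwΩ, hwm⟩ := hinv hmΩ
    have hθw : θs < w := by
      rcases lt_trichotomy w θs with hwθ | rfl | hwθ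
      · exact absurd (hm hwΩ) (hwm ▸ hleft w (hΩab hwΩ) hwθ).not_ge
      · exact absurd hwm (hfix.trans_ne hmθ.ne')
      · exact hwθ
    have htθ' : t < θs := htθ.lt_of_ne (by rintro rfl; exact (hM hwΩ).not_gt (by rwa [← htM, hfix]))
    -- `w ∈ (φ θs, φ t]` is `φ u` with `u ∈ [t, θs)`, so `m = φ (φ u) > u ≥ t ≥ m`.
    have hθb : θs ≤ b := hθw.le.trans (hΩab hwΩ).2
    obtain ⟨u, hu, hφu⟩ := intermediate_value_Icc' htθ
      (hφ.mono (Icc_subset_Icc (hΩab htΩ).1 hθb)) (by rw [hfix, htM]; exact ⟨hθw.le, hM hwΩ⟩)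
    have huθ : u < θs := hu.2.lt_of_ne (by rintro rfl; exact hθw.ne' (hφu ▸ hfix))
    have hmu : u < m := hwm ▸ hφu ▸ hsq u ⟨(hΩab htΩ).1.trans hu.1, hu.2.trans hθb⟩ huθ
    exact hmu.not_ge ((hm htΩ).trans hu.1)
  have hMθ : M = θs := by
    rw [← htM, le_antisymm htθ (hθm.trans (hm htΩ)), hfix]
  exact le_antisymm ((hM hy).trans hMθ.le) (hθm.trans (hm hy))

theorem tendsto_of_mapsTo_Icc {a b θ₀ : ℝ} (hφ : Continuous φ) (hfix : φ θs = θs)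
    (hmaps : MapsTo φ (Icc a b) (Icc a b)) (hleft : ∀ z ∈ Icc a b, z < θs → z < φ z)
    (hright : ∀ z ∈ Icc a b, θs < z → φ z < z) (hsq : ∀ z ∈ Icc a b, z < θs → z < φ (φ z))
    (hθ₀ : θ₀ ∈ Icc a b) : Tendsto (φ^[·] θ₀) atTop (𝓝 θs) := by
  have horbit : ∀ k, φ^[k] θ₀ ∈ Icc a b := fun k => hmaps.iterate k hθ₀
  set Ω := Icc a b ∩ {y | MapClusterPt y atTop (φ^[·] θ₀)}
  have hinv : Ω ⊆ φ '' Ω := fun y hy =>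
    let ⟨w, hwK, hw, hwy⟩ := exists_mapClusterPt_apply_eq hφ isCompact_Icc horbit hy.2
    ⟨w, ⟨hwK, hw⟩, hwy⟩
  have hΩ : Ω ⊆ {θs} := subset_singleton_of_subset_image
    (isCompact_Icc.inter_right isClosed_setOfPred_clusterPt) inter_subset_left hinv
    hφ.continuousOn hfix hleft hright hsq
  exact isCompact_Icc.tendsto_nhds_of_unique_mapClusterPt (Eventually.of_forall horbit)
    fun y hyK hy => hΩ ⟨hyK, hy⟩

theorem exists_tendsto_of_eventually (hφ : Continuous φ) (hfix : φ θs = θs)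
    (h : ∀ᶠ z in 𝓝 θs, (z < θs → z < φ z) ∧ (θs < z → φ z < z) ∧ (z < θs → z < φ (φ z))) :
    ∃ δ > 0, ∀ θ₀, |θ₀ - θs| < δ → Tendsto (φ^[·] θ₀) atTop (𝓝 θs) := by
  obtain ⟨a, b, hab, hsub, hmaps⟩ := exists_mapsTo_Icc_subset hφ hfix h
    (fun z hz hz' => (hz.1 hz').le) (fun z hz hz' => (hz.2.1 hz').le)
    (fun z hz hz' => (hz.2.2 hz').le)
  obtain ⟨δ, hδ, hball⟩ := Metric.mem_nhds_iff.1 hab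
  exact ⟨δ, hδ, fun θ₀ hθ₀ => tendsto_of_mapsTo_Icc hφ hfix hmaps (fun z hz => (hsub hz).1)
    (fun z hz => (hsub hz).2.1) (fun z hz => (hsub hz).2.2) (hball hθ₀)⟩

theorem eventually_of_antitoneOn_sub {s : Set ℝ} {θb : ℝ} (hfix : φ θs = θs)
    (hanti : AntitoneOn (fun θ => φ θ - θ) s) (hs : s ∈ 𝓝 θs) (hθb : θb < θs)
    (hsq : ∀ θ ∈ Ico θb θs, θ ≤ φ^[2] θ) :
    ∀ᶠ z in 𝓝 θs, (z < θs → z ≤ φ z) ∧ (θs < z → φ z ≤ z) ∧ (z < θs → z ≤ φ (φ z)) := by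
  filter_upwards [hs, Ioi_mem_nhds hθb] with z hz hθbz
  have hθ := mem_of_mem_nhds hs
  refine ⟨fun hzθ => ?_, fun hθz => ?_, fun hzθ => hsq z ⟨hθbz.le, hzθ⟩⟩
  · linarith [hanti hz hθ hzθ.le]
  · linarith [hanti hθ hz hθz.le]

theorem eventually_of_strictAntiOn_sub {s : Set ℝ} {θb : ℝ} (hfix : φ θs = θs)
    (hanti : StrictAntiOn (fun θ => φ θ - θ) s) (hs : s ∈ 𝓝 θs) (hθb : θb < θs)
    (hsq : ∀ θ ∈ Ico θb θs, θ < φ^[2] θ) :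
    ∀ᶠ z in 𝓝 θs, (z < θs → z < φ z) ∧ (θs < z → φ z < z) ∧ (z < θs → z < φ (φ z)) := by
  filter_upwards [hs, Ioi_mem_nhds hθb] with z hz hθbz
  have hθ := mem_of_mem_nhds hs
  refine ⟨fun hzθ => ?_, fun hθz => ?_, fun hzθ => hsq z ⟨hθbz.le, hzθ⟩⟩
  · linarith [hanti hz hθ hzθ]
  · linarith [hanti hθ hz hθz]

end Real

theorem stable_fixed_point_criterion_general (φ : ℝ → ℝ) (hφ : Continuous φ)
    (θs : ℝ) (hfix : φ θs = θs) :
    (((∃ ε > 0, AntitoneOn (fun θ => φ θ - θ) (Set.Ioo (θs - ε) (θs + ε))) ∧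
      (∃ θb < θs, ∀ θ ∈ Set.Ico θb θs, θ ≤ φ^[2] θ)) →
      ∀ ε > 0, ∃ δ > 0, ∀ θ₀ : ℝ, |θ₀ - θs| < δ → ∀ k : ℕ, |φ^[k] θ₀ - θs| < ε) ∧
    (((∃ ε > 0, StrictAntiOn (fun θ => φ θ - θ) (Set.Ioo (θs - ε) (θs + ε))) ∧
      (∃ θb < θs, ∀ θ ∈ Set.Ico θb θs, θ < φ^[2] θ)) →
      ((∀ ε > 0, ∃ δ > 0, ∀ θ₀ : ℝ, |θ₀ - θs| < δ → ∀ k : ℕ, |φ^[k] θ₀ - θs| < ε) ∧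
       (∃ δ > 0, ∀ θ₀ : ℝ, |θ₀ - θs| < δ →
         Tendsto (fun k : ℕ => φ^[k] θ₀) atTop (nhds θs)))) := by
  have hnhds : ∀ ε > 0, Ioo (θs - ε) (θs + ε) ∈ 𝓝 θs := fun ε hε =>
    Ioo_mem_nhds (by linarith) (by linarith)
  refine ⟨fun ⟨⟨ε, hε, hanti⟩, θb, hθb, hsq⟩ => ?_, fun ⟨⟨ε, hε, hanti⟩, θb, hθb, hsq⟩ => ?_⟩
  · simpa only [IsLyapunovStable, Real.dist_eq] using isLyapunovStable_of_eventually hφ hfix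
      (eventually_of_antitoneOn_sub hfix hanti (hnhds ε hε) hθb hsq)
  · have h := eventually_of_strictAntiOn_sub hfix hanti (hnhds ε hε) hθb hsq
    refine ⟨?_, exists_tendsto_of_eventually hφ hfix h⟩
    simpa only [IsLyapunovStable, Real.dist_eq] using isLyapunovStable_of_eventually hφ hfix
      (h.mono fun z hz => ⟨fun hzθ => (hz.1 hzθ).le, fun hθz => (hz.2.1 hθz).le,
        fun hzθ => (hz.2.2 hzθ).le⟩)

/-- Let `θ*` be an isolated fixed point of a continuous map `φ : ℝ → ℝ`.
If `φ(θ) − θ` is non-increasing (resp. strictly decreasing) on a neighborhood of `θ*` and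
there is `θ̄ < θ*` with `φ²(θ) ≥ θ` (resp. `φ²(θ) > θ`) on `[θ̄, θ*)`, then `θ*` is
Lyapunov stable (resp. asymptotically stable). -/
theorem stable_fixed_point_criterion (φ : ℝ → ℝ) (hφ : Continuous φ)
    (θs : ℝ) (hfix : φ θs = θs)
    (hiso : ∃ ε > 0, ∀ θ ∈ Set.Ioo (θs - ε) (θs + ε), φ θ = θ → θ = θs) :
    (((∃ ε > 0, AntitoneOn (fun θ => φ θ - θ) (Set.Ioo (θs - ε) (θs + ε))) ∧
      (∃ θb < θs, ∀ θ ∈ Set.Ico θb θs, θ ≤ φ^[2] θ)) →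
      ∀ ε > 0, ∃ δ > 0, ∀ θ₀ : ℝ, |θ₀ - θs| < δ → ∀ k : ℕ, |φ^[k] θ₀ - θs| < ε) ∧
    (((∃ ε > 0, StrictAntiOn (fun θ => φ θ - θ) (Set.Ioo (θs - ε) (θs + ε))) ∧
      (∃ θb < θs, ∀ θ ∈ Set.Ico θb θs, θ < φ^[2] θ)) →
      ((∀ ε > 0, ∃ δ > 0, ∀ θ₀ : ℝ, |θ₀ - θs| < δ → ∀ k : ℕ, |φ^[k] θ₀ - θs| < ε) ∧
       (∃ δ > 0, ∀ θ₀ : ℝ, |θ₀ - θs| < δ →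
         Tendsto (fun k : ℕ => φ^[k] θ₀) atTop (nhds θs)))) :=
  stable_fixed_point_criterion_general φ hφ θs hfix
end

section
/- Let σ ∈ (0, 1) and suppose τ_e(x) := min{τ > 0 : ‖x − G(τ)x‖ = σ‖G(τ)x‖} exists for every x ∈ ℝ² \ {0}. Assume global asymptotic stability of the sampled closed loop in the sense that for every x₀ ≠ 0 the sequence defined by x_{k+1} = G(τ_e(x_k)) x_k satisfies x_k ≠ 0 for all k and x_k → 0 as k → ∞. Then there exist x ≠ 0 and α ≠ 0 with G(τ_e(x)) x = α x (i.e., the 'angle' map has a fixed point) if and only if there exists τ > 0 with det(L(τ)) = 0 and a nonzero vector x in the null space of L(τ) with τ_e(x) = τ, where L(τ) := G(τ) − (1+σ)⁻¹ I. Moreover, in that case necessarily α = (1+σ)⁻¹. -/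
/-!
If `x` is an eigenvector of `G(τ_e(x))` with eigenvalue `α`, the triggering condition at `x`
reads `|1 - α| = σ |α|`. Since `τ_e` is invariant under scaling, the closed-loop orbit of `x`
is `αᵏ x`, so stability forces `|α| < 1`; together with `σ < 1` this leaves only
`α = (1 + σ)⁻¹`. The equivalence is then the statement that `x` lies in the kernel of
`G(τ) - (1 + σ)⁻¹ I` for `τ = τ_e(x)`.
-/

open Matrix Filter

/-- The Euclidean norm of a vector in `ℝ²`. -/
noncomputable def e2norm (v : Fin 2 → ℝ) : ℝ := Real.sqrt (v 0 ^ 2 + v 1 ^ 2)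

lemma e2norm_eq_norm (v : Fin 2 → ℝ) : e2norm v = ‖WithLp.toLp 2 v‖ := by
  simp [e2norm, EuclideanSpace.norm_eq, Fin.sum_univ_two]

lemma e2norm_smul (c : ℝ) (v : Fin 2 → ℝ) : e2norm (c • v) = |c| * e2norm v := by
  simp only [e2norm_eq_norm, WithLp.toLp_smul, norm_smul, Real.norm_eq_abs]

lemma e2norm_pos {v : Fin 2 → ℝ} (hv : v ≠ 0) : 0 < e2norm v := by
  rw [e2norm_eq_norm, norm_pos_iff]
  exact fun h => hv (congrArg WithLp.ofLp h)

def triggerSet (σ : ℝ) (G : ℝ → Matrix (Fin 2) (Fin 2) ℝ) (x : Fin 2 → ℝ) : Set ℝ :=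
  {τ | 0 < τ ∧ e2norm (x - G τ *ᵥ x) = σ * e2norm (G τ *ᵥ x)}

lemma triggerSet_smul (σ : ℝ) (G : ℝ → Matrix (Fin 2) (Fin 2) ℝ) {c : ℝ} (hc : c ≠ 0)
    (x : Fin 2 → ℝ) : triggerSet σ G (c • x) = triggerSet σ G x := by
  ext τ
  have hc' : 0 < |c| := abs_pos.mpr hc
  simp only [triggerSet, Set.mem_ofPred_eq, mulVec_smul, ← smul_sub, e2norm_smul]
  constructor
  · rintro ⟨hτ, h⟩
    exact ⟨hτ, mul_left_cancel₀ hc'.ne' (by linarith)⟩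
  · rintro ⟨hτ, h⟩
    exact ⟨hτ, by rw [h]; ring⟩

lemma abs_one_sub_eq_of_mem_triggerSet {σ τ α : ℝ} {G : ℝ → Matrix (Fin 2) (Fin 2) ℝ}
    {x : Fin 2 → ℝ} (hx : x ≠ 0) (hτ : τ ∈ triggerSet σ G x) (hGx : G τ *ᵥ x = α • x) :
    |1 - α| = σ * |α| := by
  have h := hτ.2
  rw [hGx, ← one_smul ℝ x, smul_smul, mul_one, ← sub_smul, e2norm_smul, e2norm_smul,
    ← mul_assoc] at h
  exact mul_right_cancel₀ (e2norm_pos hx).ne' h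

lemma abs_lt_one_of_tendsto_pow_smul {E : Type*} [NormedAddCommGroup E] [NormedSpace ℝ E]
    {α : ℝ} {x : E} (hx : x ≠ 0) (h : Tendsto (fun k : ℕ => α ^ k • x) atTop (nhds 0)) :
    |α| < 1 := by
  have hnorm : Tendsto (fun k : ℕ => |α| ^ k * ‖x‖) atTop (nhds 0) := by
    simpa [norm_smul] using h.norm
  have hpow : Tendsto (fun k : ℕ => |α| ^ k) atTop (nhds 0) := by
    simpa [mul_div_cancel_right₀ _ (norm_ne_zero_iff.mpr hx)] using hnorm.div_const ‖x‖
  simpa using tendsto_pow_atTop_nhds_zero_iff.mp hpow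

lemma eq_inv_one_add_of_abs_one_sub_eq {σ α : ℝ} (hσ : σ < 1) (hα : |α| < 1)
    (h : |1 - α| = σ * |α|) : α = (1 + σ)⁻¹ := by
  rw [abs_of_pos (by linarith [le_abs_self α] : 0 < 1 - α)] at h
  rcases le_or_gt α 0 with hneg | hpos
  · rw [abs_of_nonpos hneg] at h
    nlinarith
  · rw [abs_of_pos hpos] at h
    exact eq_inv_of_mul_eq_one_left (by linarith)

lemma sub_smul_one_mulVec_eq_zero_iff {n : Type*} [Fintype n] [DecidableEq n]
    (M : Matrix n n ℝ) (c : ℝ) (x : n → ℝ) : (M - c • 1) *ᵥ x = 0 ↔ M *ᵥ x = c • x := by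
  rw [sub_mulVec, smul_mulVec, one_mulVec, sub_eq_zero]

/-- Necessary and sufficient condition for the "angle" map to have a
fixed point under the relative-threshold triggering rule
`τ_e(x) = min{τ > 0 : ‖x − G(τ)x‖ = σ‖G(τ)x‖}`: assuming global asymptotic stability of
the sampled closed loop, there exist `x ≠ 0`, `α ≠ 0` with `G(τ_e(x))x = αx` iff there
is `τ > 0` with `det L(τ) = 0` and a nonzero `x` in the null space of `L(τ)` with
`τ_e(x) = τ`, where `L(τ) = G(τ) − (1+σ)⁻¹ I`; moreover necessarily `α = (1+σ)⁻¹`. -/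
theorem angle_map_fixed_point_iff (σ : ℝ) (hσ : σ ∈ Set.Ioo (0 : ℝ) 1)
    (G : ℝ → Matrix (Fin 2) (Fin 2) ℝ)
    (τe : (Fin 2 → ℝ) → ℝ)
    (hτe : ∀ x : Fin 2 → ℝ, x ≠ 0 →
      IsLeast {τ : ℝ | 0 < τ ∧
        e2norm (x - (G τ).mulVec x) = σ * e2norm ((G τ).mulVec x)} (τe x))
    (hGAS : ∀ x : ℕ → Fin 2 → ℝ, x 0 ≠ 0 →
      (∀ k : ℕ, x (k + 1) = (G (τe (x k))).mulVec (x k)) →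
      (∀ k : ℕ, x k ≠ 0) ∧ Tendsto x atTop (nhds 0)) :
    ((∃ x : Fin 2 → ℝ, x ≠ 0 ∧ ∃ α : ℝ, α ≠ 0 ∧ (G (τe x)).mulVec x = α • x) ↔
      (∃ τ : ℝ, 0 < τ ∧ (G τ - (1 + σ)⁻¹ • (1 : Matrix (Fin 2) (Fin 2) ℝ)).det = 0 ∧
        ∃ x : Fin 2 → ℝ, x ≠ 0 ∧
          (G τ - (1 + σ)⁻¹ • (1 : Matrix (Fin 2) (Fin 2) ℝ)).mulVec x = 0 ∧ τe x = τ)) ∧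
    (∀ x : Fin 2 → ℝ, x ≠ 0 → ∀ α : ℝ, α ≠ 0 →
      (G (τe x)).mulVec x = α • x → α = (1 + σ)⁻¹) := by
  replace hτe : ∀ x : Fin 2 → ℝ, x ≠ 0 → IsLeast (triggerSet σ G x) (τe x) := hτe
  have hτe_smul : ∀ c : ℝ, c ≠ 0 → ∀ x : Fin 2 → ℝ, x ≠ 0 → τe (c • x) = τe x :=
    fun c hc x hx => (triggerSet_smul σ G hc x ▸ hτe (c • x) (smul_ne_zero hc hx)).unique
      (hτe x hx)
  have eigenvalue_eq : ∀ x : Fin 2 → ℝ, x ≠ 0 → ∀ α : ℝ, α ≠ 0 →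
      G (τe x) *ᵥ x = α • x → α = (1 + σ)⁻¹ := by
    intro x hx α hα hGx
    have orbit : ∀ k : ℕ, α ^ (k + 1) • x = G (τe (α ^ k • x)) *ᵥ (α ^ k • x) := fun k => by
      rw [hτe_smul _ (pow_ne_zero k hα) x hx, mulVec_smul, hGx, smul_smul, pow_succ]
    obtain ⟨-, hlim⟩ := hGAS (fun k => α ^ k • x) (by simpa using hx) orbit
    exact eq_inv_one_add_of_abs_one_sub_eq hσ.2 (abs_lt_one_of_tendsto_pow_smul hx hlim)
      (abs_one_sub_eq_of_mem_triggerSet hx (hτe x hx).1 hGx)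
  refine ⟨⟨?_, ?_⟩, eigenvalue_eq⟩
  · rintro ⟨x, hx, α, hα, hGx⟩
    have hker : (G (τe x) - (1 + σ)⁻¹ • 1) *ᵥ x = 0 := by
      rw [sub_smul_one_mulVec_eq_zero_iff, ← eigenvalue_eq x hx α hα hGx, hGx]
    exact ⟨τe x, (hτe x hx).1.1, exists_mulVec_eq_zero_iff.mp ⟨x, hx, hker⟩, x, hx, hker, rfl⟩
  · rintro ⟨τ, -, -, x, hx, hker, rfl⟩
    refine ⟨x, hx, (1 + σ)⁻¹, inv_ne_zero (by linarith [hσ.1]), ?_⟩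
    exact (sub_smul_one_mulVec_eq_zero_iff _ _ _).mp hker
end

section
/- Let σ ∈ (0, 1), α := (1+σ)⁻¹, let A, A_c ∈ ℝ^{2×2} with A and A_c invertible, and let S ∈ ℝ^{2×2} be invertible with J := S⁻¹AS. Define G(τ) := I + A⁻¹(e^{Aτ} − I)A_c, L(τ) := G(τ) − αI, R := S⁻¹(I − (1−α) A A_c⁻¹) S, and σ_m(τ) := e^{λτ}·√((τ² + 2 − τ√(τ² + 4))/2). Suppose there exist τ > 0 and x ≠ 0 with L(τ)x = 0. Then: (i) if J = diag(λ₁, λ₂) with λ₁, λ₂ > 0, or J = [[μ, −ω], [ω, μ]] with μ > 0, or J = [[λ, 1], [0, λ]] with λ ≥ 1/2, then ‖R‖ > 1; (ii) if J = [[λ, 1], [0, λ]] with λ ∈ (0, 1/2), then ‖R‖ ≥ σ_m(√(1/λ² − 4)). -/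
/-!
Multiplying `L(τ)x = 0` on the left by `A` gives `e^{τA} y = (1 - (1 - α) A A_c⁻¹) y` for
`y = A_c x ≠ 0`, and conjugating by `S` gives `R z = e^{τJ} z` for `z = S⁻¹ y ≠ 0`. Hence `‖R‖` is
at least the smallest singular value of `e^{τJ}`: this is `e^{τ min(λ₁, λ₂)}` for diagonal `J`,
`e^{τμ}` for a rotation-scaling (where `e^{τJ}` is `e^{τμ}` times an orthogonal matrix) and
`σ_m(λ, τ) = exp(λτ - arsinh(τ/2))` for a Jordan block. As a function of `τ ≥ 0` the exponent has
derivative `λ - 1/√(τ² + 4)` and vanishes at `τ = 0`, so for `λ ≥ 1/2` it is positive at every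
`τ > 0`, and for `λ < 1/2` it is minimal at `τ = √(1/λ² - 4)`.
-/

open Matrix

/-- `σ_m(λ, τ) = e^{λτ}√((τ² + 2 − τ√(τ² + 4))/2)`, the minimum singular value of
`e^{Jτ}` for a non-diagonalizable Jordan block `J` with eigenvalue `λ`. -/
noncomputable def sigmaM (lam τ : ℝ) : ℝ :=
  Real.exp (lam * τ) * Real.sqrt ((τ ^ 2 + 2 - τ * Real.sqrt (τ ^ 2 + 4)) / 2)

section Algebra

variable {n K : Type*} [Fintype n] [DecidableEq n] [Field K]

lemma mul_one_add_nonsing_inv_mul_sub_smul_one {A Ac : Matrix n n K} (hA : IsUnit A.det)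
    (hAc : IsUnit Ac.det) (E : Matrix n n K) (α : K) :
    A * (1 + A⁻¹ * (E - 1) * Ac - α • 1) = (E - (1 - (1 - α) • (A * Ac⁻¹))) * Ac := by
  have h1 : A * A⁻¹ = 1 := mul_nonsing_inv A hA
  have h2 : Ac⁻¹ * Ac = 1 := nonsing_inv_mul Ac hAc
  simp only [mul_add, mul_sub, sub_mul, smul_mul_assoc, mul_smul_comm, ← mul_assoc,
    h1, one_mul, mul_one]
  rw [mul_assoc A, h2, mul_one, sub_smul, one_smul]
  abel

lemma exists_mulVec_eq_of_mulVec_eq_zero {A Ac E : Matrix n n K} (hA : IsUnit A.det)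
    (hAc : IsUnit Ac.det) {α : K} {x : n → K} (hx : x ≠ 0)
    (h : (1 + A⁻¹ * (E - 1) * Ac - α • 1) *ᵥ x = 0) :
    ∃ y ≠ 0, E *ᵥ y = (1 - (1 - α) • (A * Ac⁻¹)) *ᵥ y := by
  refine ⟨Ac *ᵥ x, fun hy => hx ?_, sub_eq_zero.1 ?_⟩
  · rw [← one_mulVec x, ← nonsing_inv_mul Ac hAc, ← mulVec_mulVec, hy, mulVec_zero]
  · rw [← sub_mulVec, mulVec_mulVec, ← mul_one_add_nonsing_inv_mul_sub_smul_one hA hAc,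
      ← mulVec_mulVec, h, mulVec_zero]

lemma exists_ne_zero_conj_mulVec_eq {E W S : Matrix n n K} (hS : IsUnit S.det) {y : n → K}
    (hy : y ≠ 0) (h : E *ᵥ y = W *ᵥ y) :
    ∃ z ≠ 0, (S⁻¹ * E * S) *ᵥ z = (S⁻¹ * W * S) *ᵥ z := by
  have hSS : S * S⁻¹ = 1 := mul_nonsing_inv S hS
  refine ⟨S⁻¹ *ᵥ y, fun hz => hy ?_, ?_⟩
  · rw [← one_mulVec y, ← hSS, ← mulVec_mulVec, hz, mulVec_zero]
  · have (M : Matrix n n K) : (S⁻¹ * M * S) *ᵥ (S⁻¹ *ᵥ y) = S⁻¹ *ᵥ (M *ᵥ y) := by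
      rw [mulVec_mulVec, mul_assoc, mul_assoc, hSS, mul_one, mulVec_mulVec]
    rw [this, this, h]

end Algebra

section SquareMatrix

variable {n : Type*} [Fintype n] [DecidableEq n]

lemma le_norm_toEuclideanCLM_of_mulVec_eq {R E : Matrix n n ℝ} {z : n → ℝ} (hz : z ≠ 0)
    (hRE : R *ᵥ z = E *ᵥ z) {c : ℝ}
    (hE : ∀ v : EuclideanSpace ℝ n, c * ‖v‖ ≤ ‖toEuclideanCLM (𝕜 := ℝ) E v‖) :
    c ≤ ‖toEuclideanCLM (𝕜 := ℝ) R‖ := by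
  set v : EuclideanSpace ℝ n := WithLp.toLp 2 z
  have hv : 0 < ‖v‖ := norm_pos_iff.2 (by simpa [v] using hz)
  calc c = c * ‖v‖ / ‖v‖ := (mul_div_cancel_right₀ _ hv.ne').symm
    _ ≤ ‖toEuclideanCLM (𝕜 := ℝ) E v‖ / ‖v‖ := by gcongr; exact hE v
    _ = ‖toEuclideanCLM (𝕜 := ℝ) R v‖ / ‖v‖ := by simp only [v, toEuclideanCLM_toLp, hRE]
    _ ≤ _ := (toEuclideanCLM (𝕜 := ℝ) R).ratio_le_opNorm v

lemma mul_norm_le_norm_toEuclideanCLM_diagonal {d : n → ℝ} {c : ℝ} (hc0 : 0 ≤ c)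
    (hc : ∀ i, c ≤ d i) (v : EuclideanSpace ℝ n) :
    c * ‖v‖ ≤ ‖toEuclideanCLM (𝕜 := ℝ) (diagonal d) v‖ := by
  refine (pow_le_pow_iff_left₀ (by positivity) (norm_nonneg _) two_ne_zero).1 ?_
  rw [mul_pow, EuclideanSpace.real_norm_sq_eq, EuclideanSpace.real_norm_sq_eq, Finset.mul_sum]
  refine Finset.sum_le_sum fun i _ => ?_
  rw [ofLp_toEuclideanCLM, mulVec_diagonal, mul_pow]
  gcongr
  exact hc i

lemma norm_toEuclideanCLM_of_transpose_mul_self {M : Matrix n n ℝ} {k : ℝ} (hk : 0 ≤ k)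
    (hM : Mᵀ * M = k ^ 2 • 1) (v : EuclideanSpace ℝ n) :
    ‖toEuclideanCLM (𝕜 := ℝ) M v‖ = k * ‖v‖ := by
  refine (pow_left_inj₀ (norm_nonneg _) (by positivity) two_ne_zero).1 ?_
  rw [mul_pow, ← real_inner_self_eq_norm_sq, ← real_inner_self_eq_norm_sq, inner_toEuclideanCLM,
    ofLp_toEuclideanCLM, dotProduct_mulVec, ← mulVec_transpose, mulVec_mulVec, hM, smul_mulVec,
    one_mulVec, smul_dotProduct, smul_eq_mul, EuclideanSpace.inner_eq_star_dotProduct,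
    star_trivial, dotProduct_comm]

lemma exp_diagonal_real (d : n → ℝ) :
    NormedSpace.exp (diagonal d) = diagonal fun i => Real.exp (d i) := by
  rw [exp_diagonal, Pi.exp_def, Real.exp_eq_exp_ℝ]

lemma exp_smul_diagonal (τ : ℝ) (d : n → ℝ) :
    NormedSpace.exp (τ • diagonal d) = diagonal fun i => Real.exp (τ * d i) := by
  rw [← diagonal_smul, exp_diagonal_real]
  rfl

lemma exp_smul_one (c : ℝ) : NormedSpace.exp (c • (1 : Matrix n n ℝ)) = Real.exp c • 1 := by
  rw [smul_one_eq_diagonal, exp_diagonal_real, smul_one_eq_diagonal]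

lemma transpose_exp_mul_exp {M : Matrix n n ℝ} {μ : ℝ} (hM : Mᵀ + M = (2 * μ) • 1) :
    (NormedSpace.exp M)ᵀ * NormedSpace.exp M = Real.exp μ ^ 2 • 1 := by
  have hcomm : Commute Mᵀ M := by
    rw [eq_sub_of_add_eq hM]
    exact ((Commute.one_left M).smul_left _).sub_left (Commute.refl M)
  rw [← exp_transpose, ← exp_add_of_commute _ _ hcomm, hM, exp_smul_one, ← Real.exp_nat_mul]
  norm_num

lemma exp_of_mul_self_eq_zero {N : Matrix n n ℝ} (hN : N * N = 0) :
    NormedSpace.exp N = 1 + N := by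
  have hpow (k : ℕ) (hk : k ∉ Finset.range 2) : (k.factorial : ℝ)⁻¹ • N ^ k = 0 := by
    obtain ⟨j, rfl⟩ := Nat.exists_eq_add_of_le (not_lt.1 (Finset.mem_range.not.1 hk))
    rw [pow_add, sq, hN, zero_mul, smul_zero]
  rw [NormedSpace.exp_eq_tsum ℝ]
  beta_reduce
  rw [tsum_eq_sum hpow]
  simp [Finset.sum_range_succ]


end SquareMatrix

section JordanBlock

open Real

lemma sqrt_one_add_half_sq (τ : ℝ) : √(1 + (τ / 2) ^ 2) = √(τ ^ 2 + 4) / 2 := by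
  rw [show 1 + (τ / 2) ^ 2 = (τ ^ 2 + 4) / 2 ^ 2 by ring, sqrt_div' _ (by positivity),
    sqrt_sq zero_le_two]

lemma exp_neg_arsinh_half (τ : ℝ) : exp (-arsinh (τ / 2)) = (√(τ ^ 2 + 4) - τ) / 2 := by
  have hsq : √(τ ^ 2 + 4) ^ 2 = τ ^ 2 + 4 := sq_sqrt (by positivity)
  have hpos : 0 < τ + √(τ ^ 2 + 4) := by nlinarith [sqrt_nonneg (τ ^ 2 + 4)]
  rw [exp_neg, exp_arsinh, sqrt_one_add_half_sq]
  field_simp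
  linear_combination (-1) * hsq

lemma sigmaM_eq (lam τ : ℝ) : sigmaM lam τ = exp (lam * τ - arsinh (τ / 2)) := by
  have hsq : √(τ ^ 2 + 4) ^ 2 = τ ^ 2 + 4 := sq_sqrt (by positivity)
  have hge : τ ≤ √(τ ^ 2 + 4) := by nlinarith [sqrt_nonneg (τ ^ 2 + 4)]
  rw [sub_eq_add_neg, exp_add, exp_neg_arsinh_half, sigmaM,
    show (τ ^ 2 + 2 - τ * √(τ ^ 2 + 4)) / 2 = ((√(τ ^ 2 + 4) - τ) / 2) ^ 2 by
      linear_combination (-1 / 4) * hsq,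
    sqrt_sq (by linarith)]

lemma arsinh_lt_self {x : ℝ} (hx : 0 < x) : arsinh x < x := by
  conv_rhs => rw [← arsinh_sinh x]
  exact arsinh_lt_arsinh.2 (self_lt_sinh_iff.2 hx)

lemma one_lt_sigmaM {lam τ : ℝ} (hlam : 1 / 2 ≤ lam) (hτ : 0 < τ) : 1 < sigmaM lam τ := by
  rw [sigmaM_eq, one_lt_exp_iff, sub_pos]
  nlinarith [arsinh_lt_self (half_pos hτ)]

lemma hasDerivAt_mul_sub_arsinh_half (lam τ : ℝ) :
    HasDerivAt (fun τ => lam * τ - arsinh (τ / 2)) (lam - (√(τ ^ 2 + 4))⁻¹) τ := by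
  have h := ((hasDerivAt_id τ).const_mul lam).sub ((hasDerivAt_id τ).div_const 2).arsinh
  refine h.congr_deriv ?_
  simp only [id, mul_one, smul_eq_mul, sqrt_one_add_half_sq]
  field_simp

/-- For `λ ≥ 1/2` the minimiser `√(1/λ² - 4)` is the square root of a nonpositive number,
i.e. `0`. -/
lemma sigmaM_sqrt_le {lam τ : ℝ} (hlam : 0 < lam) (hτ : 0 ≤ τ) :
    sigmaM lam √(1 / lam ^ 2 - 4) ≤ sigmaM lam τ := by
  set τs := √(1 / lam ^ 2 - 4)
  set h : ℝ → ℝ := fun τ => lam * τ - arsinh (τ / 2)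
  have hd (τ : ℝ) := hasDerivAt_mul_sub_arsinh_half lam τ
  have hcont : Continuous h := continuous_iff_continuousAt.2 fun τ => (hd τ).continuousAt
  have hdiff : Differentiable ℝ h := fun τ => (hd τ).differentiableAt
  suffices h τs ≤ h τ by rw [sigmaM_eq, sigmaM_eq]; exact exp_le_exp.2 this
  rcases le_total τ τs with hle | hle
  · refine antitoneOn_of_deriv_nonpos (convex_Icc 0 τs) hcont.continuousOn
      hdiff.differentiableOn (fun t ht => ?_) ⟨hτ, hle⟩ ⟨hτ.trans hle, le_rfl⟩ hle
    rw [interior_Icc] at ht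
    have : t ^ 2 < 1 / lam ^ 2 - 4 := (lt_sqrt ht.1.le).1 ht.2
    have : √(t ^ 2 + 4) < lam⁻¹ :=
      (sqrt_lt' (by positivity)).2 (by rw [inv_pow, ← one_div]; linarith)
    rw [(hd t).deriv, sub_nonpos]
    exact ((lt_inv_comm₀ (by positivity) hlam).1 this).le
  · refine monotoneOn_of_deriv_nonneg (convex_Ici τs) hcont.continuousOn
      hdiff.differentiableOn (fun t ht => ?_) Set.self_mem_Ici hle hle
    rw [interior_Ici] at ht
    have : 1 / lam ^ 2 - 4 < t ^ 2 := (sqrt_lt' ((sqrt_nonneg _).trans_lt ht)).1 ht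
    have : lam⁻¹ < √(t ^ 2 + 4) :=
      (lt_sqrt (by positivity)).2 (by rw [inv_pow, ← one_div]; linarith)
    rw [(hd t).deriv, sub_nonneg]
    exact ((inv_lt_comm₀ hlam (by positivity)).1 this).le

lemma exp_smul_jordan (lam τ : ℝ) :
    NormedSpace.exp (τ • !![lam, 1; 0, lam]) = Real.exp (lam * τ) • !![1, τ; 0, 1] := by
  have hsplit : τ • !![lam, 1; 0, lam] =
      (lam * τ) • (1 : Matrix (Fin 2) (Fin 2) ℝ) + !![0, τ; 0, 0] := by
    ext i j; fin_cases i <;> fin_cases j <;> simp [mul_comm]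
  have hN : !![0, τ; 0, 0] * !![0, τ; 0, 0] = (0 : Matrix (Fin 2) (Fin 2) ℝ) := by
    ext i j; fin_cases i <;> fin_cases j <;> simp [mul_apply]
  rw [hsplit, exp_add_of_commute _ _ ((Commute.one_left _).smul_left _), exp_smul_one,
    exp_of_mul_self_eq_zero hN, smul_mul_assoc, one_mul]
  congr 1
  ext i j; fin_cases i <;> fin_cases j <;> simp

/-- With `τ = 2 sinh t`, the singular values of the shear `!![1, τ; 0, 1]` are `e^{±t}`. -/
lemma exp_neg_arsinh_half_mul_norm_le {τ : ℝ} (hτ : 0 ≤ τ) (v : EuclideanSpace ℝ (Fin 2)) :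
    exp (-arsinh (τ / 2)) * ‖v‖ ≤ ‖toEuclideanCLM (𝕜 := ℝ) !![1, τ; 0, 1] v‖ := by
  have hm : exp (-arsinh (τ / 2)) * (exp (-arsinh (τ / 2)) + τ) = 1 := by
    have hsq : √(τ ^ 2 + 4) ^ 2 = τ ^ 2 + 4 := sq_sqrt (by positivity)
    rw [exp_neg_arsinh_half]
    linear_combination hsq / 4
  set m := exp (-arsinh (τ / 2))
  have hm0 : 0 < m := exp_pos _
  refine (pow_le_pow_iff_left₀ (by positivity) (norm_nonneg _) two_ne_zero).1 ?_
  rw [mul_pow, EuclideanSpace.real_norm_sq_eq, EuclideanSpace.real_norm_sq_eq]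
  simp only [ofLp_toEuclideanCLM, Fin.sum_univ_two]
  set a := v.ofLp 0
  set b := v.ofLp 1
  have hw : !![1, τ; 0, 1] *ᵥ v.ofLp = ![a + τ * b, b] := by
    ext i; fin_cases i <;> simp [mulVec, dotProduct, Fin.sum_univ_two, a, b]
  rw [hw]
  simp only [cons_val_zero, cons_val_one]
  -- the gap is the square `(m a + b)²`, up to the factor `τ / m`
  have hgap : m * ((a + τ * b) ^ 2 + b ^ 2 - m ^ 2 * (a ^ 2 + b ^ 2))
      = τ * (m * a + b) ^ 2 := by
    linear_combination (-(m * a ^ 2 + (m - τ) * b ^ 2)) * hm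
  have : 0 ≤ m * ((a + τ * b) ^ 2 + b ^ 2 - m ^ 2 * (a ^ 2 + b ^ 2)) := by
    rw [hgap]; positivity
  linarith [(mul_nonneg_iff_of_pos_left hm0).1 this]

lemma sigmaM_mul_norm_le (lam : ℝ) {τ : ℝ} (hτ : 0 ≤ τ) (v : EuclideanSpace ℝ (Fin 2)) :
    sigmaM lam τ * ‖v‖ ≤
      ‖toEuclideanCLM (𝕜 := ℝ) (NormedSpace.exp (τ • !![lam, 1; 0, lam])) v‖ := by
  rw [exp_smul_jordan, map_smul, _root_.smul_apply, norm_smul,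
    norm_of_nonneg (exp_pos _).le, sigmaM_eq, sub_eq_add_neg, exp_add, mul_assoc]
  exact mul_le_mul_of_nonneg_left (exp_neg_arsinh_half_mul_norm_le hτ v) (exp_pos _).le

end JordanBlock

lemma norm_toEuclideanCLM_exp_smul_rotation (μ ω τ : ℝ) (v : EuclideanSpace ℝ (Fin 2)) :
    ‖toEuclideanCLM (𝕜 := ℝ) (NormedSpace.exp (τ • !![μ, -ω; ω, μ])) v‖ =
      Real.exp (τ * μ) * ‖v‖ := by
  refine norm_toEuclideanCLM_of_transpose_mul_self (Real.exp_pos _).le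
    (transpose_exp_mul_exp ?_) v
  ext i j; fin_cases i <;> fin_cases j <;> simp <;> ring

theorem necessary_condition_fixed_point_general (σ : ℝ)
    (A Ac S J R : Matrix (Fin 2) (Fin 2) ℝ)
    (hA : IsUnit A.det) (hAc : IsUnit Ac.det) (hS : IsUnit S.det)
    (hJ : J = S⁻¹ * A * S)
    (hR : R = S⁻¹ * (1 - (1 - (1 + σ)⁻¹) • (A * Ac⁻¹)) * S)
    (G : ℝ → Matrix (Fin 2) (Fin 2) ℝ)
    (hG : ∀ τ : ℝ, G τ = 1 + A⁻¹ * (NormedSpace.exp (τ • A) - 1) * Ac)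
    (hfix : ∃ τ : ℝ, 0 < τ ∧ ∃ x : Fin 2 → ℝ, x ≠ 0 ∧
      (G τ - (1 + σ)⁻¹ • (1 : Matrix (Fin 2) (Fin 2) ℝ)).mulVec x = 0) :
    (((∃ l1 l2 : ℝ, 0 < l1 ∧ 0 < l2 ∧ J = Matrix.diagonal ![l1, l2]) ∨
      (∃ μ ω : ℝ, 0 < μ ∧ J = !![μ, -ω; ω, μ]) ∨
      (∃ lam : ℝ, 1 / 2 ≤ lam ∧ J = !![lam, 1; 0, lam])) →
      1 < ‖Matrix.toEuclideanCLM (𝕜 := ℝ) R‖) ∧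
    (∀ lam : ℝ, lam ∈ Set.Ioo (0 : ℝ) (1 / 2) → J = !![lam, 1; 0, lam] →
      sigmaM lam (Real.sqrt (1 / lam ^ 2 - 4)) ≤ ‖Matrix.toEuclideanCLM (𝕜 := ℝ) R‖) := by
  obtain ⟨τ, hτ, x, hx, hLx⟩ := hfix
  rw [hG] at hLx
  obtain ⟨y, hy, hEy⟩ := exists_mulVec_eq_of_mulVec_eq_zero hA hAc hx hLx
  obtain ⟨z, hz, hRz⟩ := exists_ne_zero_conj_mulVec_eq hS hy hEy
  rw [← exp_conj' S _ ((isUnit_iff_isUnit_det S).2 hS), mul_smul_comm, smul_mul_assoc, ← hJ,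
    ← hR] at hRz
  have hgain {c : ℝ}
      (hc : ∀ v, c * ‖v‖ ≤ ‖toEuclideanCLM (𝕜 := ℝ) (NormedSpace.exp (τ • J)) v‖) :
      c ≤ ‖toEuclideanCLM (𝕜 := ℝ) R‖ :=
    le_norm_toEuclideanCLM_of_mulVec_eq hz hRz.symm hc
  refine ⟨?_, fun lam hlam hJl => hgain fun v => ?_⟩
  · rintro (⟨l1, l2, hl1, hl2, rfl⟩ | ⟨μ, ω, hμ, rfl⟩ | ⟨lam, hlam, rfl⟩)
    · refine (Real.one_lt_exp_iff.2 (mul_pos hτ (lt_min hl1 hl2))).trans_le (hgain ?_)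
      rw [exp_smul_diagonal]
      refine mul_norm_le_norm_toEuclideanCLM_diagonal (Real.exp_pos _).le
        (Fin.forall_fin_two.2 ⟨?_, ?_⟩) <;> gcongr <;> simp
    · exact (Real.one_lt_exp_iff.2 (mul_pos hτ hμ)).trans_le
        (hgain fun v => (norm_toEuclideanCLM_exp_smul_rotation μ ω τ v).ge)
    · exact (one_lt_sigmaM hlam hτ).trans_le (hgain (sigmaM_mul_norm_le lam hτ.le))
  · rw [hJl]
    exact (mul_le_mul_of_nonneg_right (sigmaM_sqrt_le hlam.1 hτ.le) (norm_nonneg v)).trans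
      (sigmaM_mul_norm_le lam hτ.le v)

/-- Algebraic necessary condition for the "angle" map to have a fixed
point under the relative-threshold triggering rule: if `L(τ)x = 0` for some `τ > 0`,
`x ≠ 0`, then `‖R‖ > 1` when the real Jordan form `J = S⁻¹AS` is diagonal with positive
entries, a rotation-scaling with positive real part, or a Jordan block with eigenvalue
`λ ≥ 1/2`; and `‖R‖ ≥ σ_m(√(1/λ² − 4))` when `J` is a Jordan block with `λ ∈ (0, 1/2)`.
Here `‖·‖` is the operator norm induced by the Euclidean norm. -/
theorem necessary_condition_fixed_point (σ : ℝ) (hσ : σ ∈ Set.Ioo (0 : ℝ) 1)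
    (A Ac S J R : Matrix (Fin 2) (Fin 2) ℝ)
    (hA : IsUnit A.det) (hAc : IsUnit Ac.det) (hS : IsUnit S.det)
    (hJ : J = S⁻¹ * A * S)
    (hR : R = S⁻¹ * (1 - (1 - (1 + σ)⁻¹) • (A * Ac⁻¹)) * S)
    (G : ℝ → Matrix (Fin 2) (Fin 2) ℝ)
    (hG : ∀ τ : ℝ, G τ = 1 + A⁻¹ * (NormedSpace.exp (τ • A) - 1) * Ac)
    (hfix : ∃ τ : ℝ, 0 < τ ∧ ∃ x : Fin 2 → ℝ, x ≠ 0 ∧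
      (G τ - (1 + σ)⁻¹ • (1 : Matrix (Fin 2) (Fin 2) ℝ)).mulVec x = 0) :
    (((∃ l1 l2 : ℝ, 0 < l1 ∧ 0 < l2 ∧ J = Matrix.diagonal ![l1, l2]) ∨
      (∃ μ ω : ℝ, 0 < μ ∧ J = !![μ, -ω; ω, μ]) ∨
      (∃ lam : ℝ, 1 / 2 ≤ lam ∧ J = !![lam, 1; 0, lam])) →
      1 < ‖Matrix.toEuclideanCLM (𝕜 := ℝ) R‖) ∧
    (∀ lam : ℝ, lam ∈ Set.Ioo (0 : ℝ) (1 / 2) → J = !![lam, 1; 0, lam] →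
      sigmaM lam (Real.sqrt (1 / lam ^ 2 - 4)) ≤ ‖Matrix.toEuclideanCLM (𝕜 := ℝ) R‖) :=
  necessary_condition_fixed_point_general σ A Ac S J R hA hAc hS hJ hR G hG hfix
end

section
/- Let α ∈ (0, 1), let S ∈ ℝ^{2×2} be invertible, and suppose J := S⁻¹AS satisfies either J = diag(λ₁, λ₂) with λ₁, λ₂ > 0, or J = [[μ, −ω], [ω, μ]] with μ > 0 (i.e., A is diagonalizable over ℂ with both eigenvalues of positive real part). Let A_c ∈ ℝ^{2×2} be invertible and have a real eigenvalue λ_c < 0 with eigenvector x ≠ 0. Then ‖R‖ > 1, where R := S⁻¹(I − (1−α) A A_c⁻¹) S. -/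
/-!
Put `w = S⁻¹ x` and `J = S⁻¹ A S`. Since `A_c⁻¹ x = λ_c⁻¹ x`, the matrix `R` acts on `w` as
`R w = w + t J w` with `t = -(1 - α) / λ_c > 0`. Both real Jordan forms have a positive quadratic
form, `⟪w, J w⟫ > 0`, so `‖R w‖² = ‖w‖² + 2t ⟪w, J w⟫ + t² ‖J w‖² > ‖w‖²`, whence `‖R‖ > 1`.
-/

open Matrix

open scoped RealInnerProductSpace

theorem norm_lt_norm_add_smul_of_inner_pos {E : Type*} [NormedAddCommGroup E]
    [InnerProductSpace ℝ E] {v u : E} {t : ℝ} (ht : 0 < t) (h : 0 < ⟪v, u⟫) :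
    ‖v‖ < ‖v + t • u‖ := by
  have hsq : ‖v‖ ^ 2 < ‖v + t • u‖ ^ 2 := by
    rw [norm_add_sq_real, real_inner_smul_right, norm_smul]
    nlinarith [mul_pos ht h, sq_nonneg (‖t‖ * ‖u‖)]
  exact lt_of_pow_lt_pow_left₀ 2 (norm_nonneg _) hsq

theorem ContinuousLinearMap.one_lt_opNorm_of_norm_lt {𝕜 E F : Type*}
    [NontriviallyNormedField 𝕜] [SeminormedAddCommGroup E] [SeminormedAddCommGroup F]
    [NormedSpace 𝕜 E] [NormedSpace 𝕜 F] (T : E →L[𝕜] F) {v : E} (h : ‖v‖ < ‖T v‖) :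
    1 < ‖T‖ :=
  lt_of_mul_lt_mul_right (by simpa using h.trans_le (T.le_opNorm v)) (norm_nonneg v)

namespace Matrix

variable {n K : Type*} [Fintype n] [DecidableEq n] [Field K]

theorem inv_mulVec_eq_inv_smul {A : Matrix n n K} (hA : IsUnit A.det) {c : K} {x : n → K}
    (h : A *ᵥ x = c • x) : A⁻¹ *ᵥ x = c⁻¹ • x := by
  have hx : x = c • A⁻¹ *ᵥ x := by
    rw [← mulVec_smul, ← h, mulVec_mulVec, nonsing_inv_mul A hA, one_mulVec]
  rcases eq_or_ne c 0 with rfl | hc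
  · rw [zero_smul] at hx
    rw [hx, mulVec_zero, smul_zero]
  · rw [hx, smul_smul, inv_mul_cancel₀ hc, one_smul, ← hx]

theorem conj_mulVec_inv_mulVec {S : Matrix n n K} (hS : IsUnit S.det) (M : Matrix n n K)
    (x : n → K) : (S⁻¹ * M * S) *ᵥ (S⁻¹ *ᵥ x) = S⁻¹ *ᵥ (M *ᵥ x) := by
  rw [mulVec_mulVec, Matrix.mul_assoc _ S, mul_nonsing_inv S hS, Matrix.mul_one, mulVec_mulVec]

theorem sub_smul_mul_mulVec_of_mulVec_eq_smul (A : Matrix n n K) {B : Matrix n n K} {d : K}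
    {x : n → K} (h : B *ᵥ x = d • x) (k : K) :
    (1 - k • (A * B)) *ᵥ x = x - (k * d) • A *ᵥ x := by
  rw [sub_mulVec, one_mulVec, smul_mulVec, ← mulVec_mulVec, h, mulVec_smul, smul_smul]

theorem dotProduct_rotScale_mulVec {R : Type*} [CommRing R] (μ ω : R) (w : Fin 2 → R) :
    w ⬝ᵥ !![μ, -ω; ω, μ] *ᵥ w = μ * (w ⬝ᵥ w) := by
  simp only [dotProduct, Fin.sum_univ_two, mulVec, cons_val', cons_val_zero, cons_val_one,
    empty_val', cons_val_fin_one, of_apply]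
  ring

theorem dotProduct_mulVec_pos_of_realJordan {J : Matrix (Fin 2) (Fin 2) ℝ}
    (hJ : (∃ l1 l2 : ℝ, 0 < l1 ∧ 0 < l2 ∧ J = diagonal ![l1, l2]) ∨
      (∃ μ ω : ℝ, 0 < μ ∧ J = !![μ, -ω; ω, μ]))
    {w : Fin 2 → ℝ} (hw : w ≠ 0) : 0 < w ⬝ᵥ J *ᵥ w := by
  have hww : 0 < w ⬝ᵥ w := by simpa using dotProduct_star_self_pos_iff.mpr hw
  rcases hJ with ⟨l1, l2, hl1, hl2, rfl⟩ | ⟨μ, ω, hμ, rfl⟩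
  · have hpos : (diagonal ![l1, l2]).PosDef :=
      posDef_diagonal_iff.mpr (Fin.forall_fin_two.mpr ⟨hl1, hl2⟩)
    simpa using hpos.dotProduct_mulVec_pos hw
  · rw [dotProduct_rotScale_mulVec]
    positivity

end Matrix

/-- If `A` is diagonalizable over `ℂ` with both eigenvalues of
positive real part (real Jordan form `J = S⁻¹AS` either diagonal with positive entries
or a rotation-scaling with positive real part `μ`), `α ∈ (0, 1)`, and `A_c` is
invertible with a real eigenvalue `λ_c < 0`, then `‖R‖ > 1`, where
`R = S⁻¹(I − (1−α) A A_c⁻¹) S` and `‖·‖` is the Euclidean operator norm. -/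
theorem necessary_condition_always_satisfied (α : ℝ) (hα : α ∈ Set.Ioo (0 : ℝ) 1)
    (A Ac S : Matrix (Fin 2) (Fin 2) ℝ) (hS : IsUnit S.det) (hAc : IsUnit Ac.det)
    (hJ : (∃ l1 l2 : ℝ, 0 < l1 ∧ 0 < l2 ∧ S⁻¹ * A * S = Matrix.diagonal ![l1, l2]) ∨
          (∃ μ ω : ℝ, 0 < μ ∧ S⁻¹ * A * S = !![μ, -ω; ω, μ]))
    (lc : ℝ) (hlc : lc < 0) (x : Fin 2 → ℝ) (hx : x ≠ 0)
    (heig : Ac.mulVec x = lc • x) :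
    1 < ‖Matrix.toEuclideanCLM (𝕜 := ℝ) (n := Fin 2) (S⁻¹ * (1 - (1 - α) • (A * Ac⁻¹)) * S)‖ := by
  set J := S⁻¹ * A * S
  set w := S⁻¹ *ᵥ x
  set t := -((1 - α) * lc⁻¹)
  have ht : 0 < t := neg_pos.mpr (mul_neg_of_pos_of_neg (sub_pos.mpr hα.2) (inv_lt_zero.mpr hlc))
  have hw : w ≠ 0 := fun h ↦ hx <| by
    rw [← one_mulVec x, ← mul_nonsing_inv S hS, ← mulVec_mulVec]
    exact (congrArg (S *ᵥ ·) h).trans (mulVec_zero S)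
  have hRw : (S⁻¹ * (1 - (1 - α) • (A * Ac⁻¹)) * S) *ᵥ w = w + t • J *ᵥ w := by
    rw [conj_mulVec_inv_mulVec hS, sub_smul_mul_mulVec_of_mulVec_eq_smul A
      (inv_mulVec_eq_inv_smul hAc heig), mulVec_sub, mulVec_smul, ← conj_mulVec_inv_mulVec hS,
      neg_smul, sub_eq_add_neg]
  refine ContinuousLinearMap.one_lt_opNorm_of_norm_lt _ (v := WithLp.toLp 2 w) ?_
  rw [toEuclideanCLM_toLp, hRw]
  refine norm_lt_norm_add_smul_of_inner_pos (u := WithLp.toLp 2 (J *ᵥ w)) ht ?_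
  rw [EuclideanSpace.inner_toLp_toLp, star_trivial, dotProduct_comm]
  exact dotProduct_mulVec_pos_of_realJordan hJ hw
end
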